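/- Let 𝒜 be a saturated class of morphisms of marked simplicial sets, all of whose underlying maps are monomorphisms, having the right cancellation property, and containing (1) all maps A^♭ ↪ B^♭ for A → B inner anodyne, and (2) all ℒ-marked left spine inclusions L_n^ℒ ↪ (Δⁿ)^ℒ for n ≥ 2. Then 𝒜 contains all ℒ-marked left horn inclusions (Λⁿ₀)^ℒ ↪ (Δⁿ)^ℒ for n ≥ 2. -/

import Mathlib

set_option linter.unusedVariables false

open CategoryTheory CategoryTheory.Limits Simplicial Opposite

namespace Paper

abbrev BSSet : Type 1 := SimplexCategoryᵒᵖ × SimplexCategoryᵒᵖ ⥤ Type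

@[simps]
def boxObj (A B : SSet.{0}) : BSSet where
  obj p := A.obj p.1 × B.obj p.2
  map f := TypeCat.ofHom fun x => (A.map f.1 x.1, B.map f.2 x.2)
  map_id p := by ext x <;> simp
  map_comp f g := by ext x <;> simp

@[simps]
def boxMap {A A' B B' : SSet.{0}} (u : A ⟶ A') (v : B ⟶ B') :
    boxObj A B ⟶ boxObj A' B' where
  app p := TypeCat.ofHom fun x => (u.app p.1 x.1, v.app p.2 x.2)
  naturality p q φ := by
    apply ConcreteCategory.hom_ext
    intro x
    refine Prod.ext ?_ ?_
    exacts [types_congr_hom (u.naturality φ.1) x.1, types_congr_hom (v.naturality φ.2) x.2]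

lemma boxMap_id (A B : SSet.{0}) : boxMap (𝟙 A) (𝟙 B) = 𝟙 (boxObj A B) := rfl

lemma boxMap_comp {A A' A'' B B' B'' : SSet.{0}} (u : A ⟶ A') (u' : A' ⟶ A'')
    (v : B ⟶ B') (v' : B' ⟶ B'') :
    boxMap (u ≫ u') (v ≫ v') = boxMap u v ≫ boxMap u' v' := rfl

def under (A : SSet.{0}) (X : BSSet) : SSet.{0} where
  obj n := boxObj A (SSet.stdSimplex.obj n.unop) ⟶ X
  map φ := TypeCat.ofHom fun σ => boxMap (𝟙 A) (SSet.stdSimplex.map φ.unop) ≫ σ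
  map_id n := by
    apply ConcreteCategory.hom_ext
    intro σ
    show boxMap (𝟙 A) (SSet.stdSimplex.map (𝟙 n.unop)) ≫ σ = σ
    rw [CategoryTheory.Functor.map_id (self := SSet.stdSimplex), boxMap_id, Category.id_comp]
  map_comp {n m k} φ ψ := by
    apply ConcreteCategory.hom_ext
    intro σ
    show boxMap (𝟙 A) (SSet.stdSimplex.map (ψ.unop ≫ φ.unop)) ≫ σ = _
    rw [Functor.map_comp (self := SSet.stdSimplex), show (𝟙 A : A ⟶ A) = 𝟙 A ≫ 𝟙 A from (Category.id_comp _).symm,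
      boxMap_comp, Category.assoc]
    rfl

def over' (X : BSSet) (B : SSet.{0}) : SSet.{0} where
  obj n := boxObj (SSet.stdSimplex.obj n.unop) B ⟶ X
  map φ := TypeCat.ofHom fun σ => boxMap (SSet.stdSimplex.map φ.unop) (𝟙 B) ≫ σ
  map_id n := by
    apply ConcreteCategory.hom_ext
    intro σ
    show boxMap (SSet.stdSimplex.map (𝟙 n.unop)) (𝟙 B) ≫ σ = σ
    rw [CategoryTheory.Functor.map_id (self := SSet.stdSimplex), boxMap_id, Category.id_comp]
  map_comp {n m k} φ ψ := by
    apply ConcreteCategory.hom_ext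
    intro σ
    show boxMap (SSet.stdSimplex.map (ψ.unop ≫ φ.unop)) (𝟙 B) ≫ σ = _
    rw [Functor.map_comp (self := SSet.stdSimplex), show (𝟙 B : B ⟶ B) = 𝟙 B ≫ 𝟙 B from (Category.id_comp _).symm,
      boxMap_comp, Category.assoc]
    rfl

@[simps]
def underWhisker {A A' : SSet.{0}} (u : A ⟶ A') (X : BSSet) :
    under A' X ⟶ under A X where
  app n := TypeCat.ofHom fun σ => boxMap u (𝟙 _) ≫ σ
  naturality n m φ := rfl

@[simps]
def underPush (A : SSet.{0}) {X Y : BSSet} (f : X ⟶ Y) :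
    under A X ⟶ under A Y where
  app n := TypeCat.ofHom fun σ => σ ≫ f
  naturality n m φ := rfl

@[simps]
def overPush (B : SSet.{0}) {X Y : BSSet} (f : X ⟶ Y) :
    over' X B ⟶ over' Y B where
  app n := TypeCat.ofHom fun σ => σ ≫ f
  naturality n m φ := rfl

---- new chunk

/-- The functor `A □ - : SSet ⥤ BSSet`. -/
@[simps]
def boxLFunctor (A : SSet.{0}) : SSet.{0} ⥤ BSSet where
  obj B := boxObj A B
  map v := boxMap (𝟙 A) v
  map_id B := rfl
  map_comp v w := rfl

/-- The functor `- □ B : SSet ⥤ BSSet`. -/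
@[simps]
def boxRFunctor (B : SSet.{0}) : SSet.{0} ⥤ BSSet where
  obj A := boxObj A B
  map u := boxMap u (𝟙 B)
  map_id A := rfl
  map_comp u w := rfl

/-- The functor `A \ - : BSSet ⥤ SSet`. -/
@[simps]
def underFunctor (A : SSet.{0}) : BSSet ⥤ SSet.{0} where
  obj X := under A X
  map f := underPush A f
  map_id X := rfl
  map_comp f g := rfl

/-- The functor `- / B : BSSet ⥤ SSet`. -/
@[simps]
def overFunctor (B : SSet.{0}) : BSSet ⥤ SSet.{0} where
  obj X := over' X B
  map f := overPush B f
  map_id X := rfl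
  map_comp f g := rfl

/-- A map of simplicial sets is a Kan fibration if it has the right lifting property
with respect to all horn inclusions `Λ[n, i] ⟶ Δ[n]`, `n ≥ 1`, `0 ≤ i ≤ n`. -/
def IsKanFibration {S T : SSet.{0}} (f : S ⟶ T) : Prop :=
  ∀ (n : ℕ) (i : Fin (n + 2)), HasLiftingProperty (Λ[n + 1, i].ι) f

/-- A map of simplicial sets is a trivial Kan fibration if it has the right lifting property
with respect to all boundary inclusions `∂Δ[n] ⟶ Δ[n]`. -/
def IsTrivialKanFibration {S T : SSet.{0}} (f : S ⟶ T) : Prop :=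
  ∀ (n : ℕ), HasLiftingProperty (∂Δ[n].ι) f

/-- A map of simplicial sets is an inner fibration if it has the right lifting property
with respect to all inner horn inclusions `Λ[n, i] ⟶ Δ[n]`, `0 < i < n`. -/
def IsInnerFibration {S T : SSet.{0}} (f : S ⟶ T) : Prop :=
  ∀ (n : ℕ) (i : Fin (n + 1)), 0 < (i : ℕ) → (i : ℕ) < n →
    HasLiftingProperty (Λ[n, i].ι) f

lemma underSq {A A' : SSet.{0}} (u : A ⟶ A') {X Y : BSSet} (f : X ⟶ Y) :
    underWhisker u X ≫ underPush A f = underPush A' f ≫ underWhisker u Y := rfl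

/-- The gap map `⟨u \ f⟩ : A' \ X ⟶ A \ X ×_{A \ Y} A' \ Y`. -/
noncomputable def underGap {A A' : SSet.{0}} (u : A ⟶ A') {X Y : BSSet} (f : X ⟶ Y) :
    under A' X ⟶ pullback (underPush A f) (underWhisker u Y) :=
  pullback.lift (underWhisker u X) (underPush A' f) (underSq u f)

/-- A map of bisimplicial sets is a Reedy fibration if for every monomorphism `u : A ⟶ A'`
of simplicial sets, the gap map `⟨u \ f⟩` is a Kan fibration. -/
def IsReedyFibration {X Y : BSSet} (f : X ⟶ Y) : Prop :=
  ∀ ⦃A A' : SSet.{0}⦄ (u : A ⟶ A'), Mono u → IsKanFibration (underGap u f)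

/-- A bisimplicial set is Reedy fibrant if for every monomorphism `u : A ⟶ A'` of
simplicial sets, the restriction map `⟨u \ X⟩ : A' \ X ⟶ A \ X` is a Kan fibration. -/
def IsReedyFibrant (X : BSSet) : Prop :=
  ∀ ⦃A A' : SSet.{0}⦄ (u : A ⟶ A'), Mono u → IsKanFibration (underWhisker u X)

/-- The cylinder `A × Δ¹` on a simplicial set. -/
def cyl (A : SSet.{0}) : SSet.{0} where
  obj n := A.obj n × Δ[1].obj n
  map f := TypeCat.ofHom fun x => (A.map f x.1, Δ[1].map f x.2)
  map_id n := by ext x <;> simp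
  map_comp f g := by ext x <;> simp

/-- The inclusion `A ⟶ A × Δ¹` at the vertex `k` of `Δ¹`. -/
def cylIncl (k : Fin 2) (A : SSet.{0}) : A ⟶ cyl A where
  app n := TypeCat.ofHom fun a => (a, SSet.stdSimplex.const 1 k n)
  naturality n m f := rfl

/-- Functoriality of the cylinder. -/
def cylMap {A B : SSet.{0}} (f : A ⟶ B) : cyl A ⟶ cyl B where
  app n := TypeCat.ofHom fun x => (f.app n x.1, x.2)
  naturality n m φ := by
    apply ConcreteCategory.hom_ext
    intro x
    refine Prod.ext ?_ ?_
    exacts [types_congr_hom (f.naturality φ) x.1, rfl]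

lemma cylIncl_cylMap (k : Fin 2) {A B : SSet.{0}} (f : A ⟶ B) :
    cylIncl k A ≫ cylMap f = f ≫ cylIncl k B := rfl

/-- Two maps of simplicial sets are related by an elementary homotopy if there is a
cylinder homotopy from one to the other. -/
def HomotopicOne {A B : SSet.{0}} (f g : A ⟶ B) : Prop :=
  ∃ H : cyl A ⟶ B, cylIncl 0 A ≫ H = f ∧ cylIncl 1 A ≫ H = g

/-- A Kan complex: every horn has a filler. -/
def IsKanComplex (S : SSet.{0}) : Prop :=
  ∀ (n : ℕ) (i : Fin (n + 2)) (g : (Λ[n + 1, i] : SSet) ⟶ S),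
    ∃ h : Δ[n + 1] ⟶ S, Λ[n + 1, i].ι ≫ h = g

/-- Precomposition on homotopy classes of maps. -/
def precompClass {A B : SSet.{0}} (f : A ⟶ B) (Z : SSet.{0}) :
    Quot (@HomotopicOne B Z) → Quot (@HomotopicOne A Z) :=
  Quot.lift (fun g => Quot.mk _ (f ≫ g)) (by
    rintro g g' ⟨H, h0, h1⟩
    apply Quot.sound
    refine ⟨cylMap f ≫ H, ?_, ?_⟩
    · rw [← Category.assoc, cylIncl_cylMap, Category.assoc, h0]
    · rw [← Category.assoc, cylIncl_cylMap, Category.assoc, h1])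

/-- A map of simplicial sets is a weak homotopy equivalence iff for every Kan complex `Z`
the induced map on homotopy classes of maps into `Z` is a bijection. -/
def WeakEquiv {A B : SSet.{0}} (f : A ⟶ B) : Prop :=
  ∀ Z : SSet.{0}, IsKanComplex Z → Function.Bijective (precompClass f Z)

/-- A commutative square of simplicial sets (with `g` thought of as the right-hand vertical
map) is a homotopy pullback if for some factorization of `g` as a weak equivalence followed
by a Kan fibration, the induced gap map to the strict pullback is a weak equivalence. -/
noncomputable def IsHomotopyPullback {W U V Z : SSet.{0}}
    (a : W ⟶ U) (b : W ⟶ V) (g : U ⟶ Z) (h : V ⟶ Z) (comm : a ≫ g = b ≫ h) : Prop :=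
  ∃ (U' : SSet.{0}) (w : U ⟶ U') (p : U' ⟶ Z) (hwp : w ≫ p = g),
    WeakEquiv w ∧ IsKanFibration p ∧
      WeakEquiv (pullback.lift (a ≫ w) b
        (by rw [Category.assoc, hwp, comm]) : W ⟶ pullback p h)

/-- The spine of `Δ[n]`: the union of the edges `Δ{i, i+1}`. -/
def spine (n : ℕ) : SSet.{0} where
  obj m := { a : Δ[n].obj m //
    ∃ i : ℕ, ∀ j, ((SSet.stdSimplex.asOrderHom a) j : ℕ) = i ∨ ((SSet.stdSimplex.asOrderHom a) j : ℕ) = i + 1 }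
  map f := TypeCat.ofHom fun a => ⟨Δ[n].map f a.1, by
    obtain ⟨i, hi⟩ := a.2
    exact ⟨i, fun j => hi _⟩⟩
  map_id m := by
    apply ConcreteCategory.hom_ext
    intro a
    apply Subtype.ext
    show Δ[n].map (𝟙 m) a.1 = a.1
    simp
  map_comp f g := by
    apply ConcreteCategory.hom_ext
    intro a
    apply Subtype.ext
    show Δ[n].map (f ≫ g) a.1 = Δ[n].map g (Δ[n].map f a.1)
    simp

def spineIncl (n : ℕ) : spine n ⟶ Δ[n] where
  app m := TypeCat.ofHom fun a => a.1
  naturality n m f := rfl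


/-- A Segal space: a Reedy fibrant bisimplicial set whose Segal maps
`X_n ⟶ X_1 ×_{X_0} ⋯ ×_{X_0} X_1` (i.e. the restrictions `Δⁿ \\ X ⟶ Iₙ \\ X` along the
spine inclusions) are weak homotopy equivalences for `n ≥ 2`. -/
def IsSegalSpace (X : BSSet) : Prop :=
  IsReedyFibrant X ∧ ∀ n : ℕ, 2 ≤ n → WeakEquiv (underWhisker (spineIncl n) X)

/-- The unique map to `⦋0⦌` in the simplex category. -/
def toZero (m : SimplexCategory) : m ⟶ ⦋0⦌ :=
  SimplexCategory.Hom.mk ⟨fun _ => 0, fun _ _ _ => le_rfl⟩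

lemma toZero_unique {m : SimplexCategory} (f g : m ⟶ ⦋0⦌) : f = g := by
  apply SimplexCategory.Hom.ext
  apply OrderHom.ext
  funext j
  apply Fin.ext
  have h1 : ((f.toOrderHom j : Fin (⦋0⦌.len + 1)) : ℕ) < 0 + 1 := (f.toOrderHom j).isLt
  have h2 : ((g.toOrderHom j : Fin (⦋0⦌.len + 1)) : ℕ) < 0 + 1 := (g.toOrderHom j).isLt
  omega

lemma toZero_comp {m m' : SimplexCategory} (φ : m' ⟶ m) :
    φ ≫ toZero m = toZero m' :=
  toZero_unique _ _

lemma boxMapR_comp (A : SSet.{0}) {B B' B'' : SSet.{0}} (v : B ⟶ B') (w : B' ⟶ B'') :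
    boxMap (𝟙 A) (v ≫ w) = boxMap (𝟙 A) v ≫ boxMap (𝟙 A) w := rfl

/-- The map `Δ[1] □ Δ[0] ⟶ X` corresponding to an element `e ∈ X_{1,0}` by the Yoneda lemma. -/
def yonedaBox {X : BSSet} (e : X.obj (op ⦋1⦌, op ⦋0⦌)) :
    boxObj Δ[1] Δ[0] ⟶ X where
  app p := TypeCat.ofHom fun x =>
    X.map ((SSet.stdSimplex.objEquiv x.1).op,
      (SSet.stdSimplex.objEquiv x.2).op) e
  naturality p q φ := by
    apply ConcreteCategory.hom_ext
    intro x
    exact FunctorToTypes.map_comp_apply X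
      ((SSet.stdSimplex.objEquiv x.1).op, (SSet.stdSimplex.objEquiv x.2).op) φ e

def fApp {X Y : BSSet} (f : X ⟶ Y) (e : X.obj (op ⦋1⦌, op ⦋0⦌)) : Y.obj (op ⦋1⦌, op ⦋0⦌) :=
  f.app (op ⦋1⦌, op ⦋0⦌) e

lemma yonedaBox_comp {X Y : BSSet} (f : X ⟶ Y) (e : X.obj (op ⦋1⦌, op ⦋0⦌)) :
    yonedaBox e ≫ f = yonedaBox (fApp f e) := by
  apply NatTrans.ext
  funext p
  ext x
  exact types_congr_hom (f.naturality _) e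

/-- The constant `Δ[1] □ Δ[m]`-diagram in `X` with value the edge `e`. -/
def eConst {X : BSSet} (m : SimplexCategory) (e : X.obj (op ⦋1⦌, op ⦋0⦌)) :
    boxObj Δ[1] (SSet.stdSimplex.obj m) ⟶ X :=
  boxMap (𝟙 Δ[1]) (SSet.stdSimplex.map (toZero m)) ≫ yonedaBox e

lemma eConst_whisker {X : BSSet} {m m' : SimplexCategory} (φ : m' ⟶ m)
    (e : X.obj (op ⦋1⦌, op ⦋0⦌)) :
    boxMap (𝟙 Δ[1]) (SSet.stdSimplex.map φ) ≫ eConst m e = eConst m' e := by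
  rw [eConst, eConst, ← Category.assoc, ← boxMapR_comp, ← Functor.map_comp (self := SSet.stdSimplex), toZero_comp]

lemma eConst_comp {X Y : BSSet} (f : X ⟶ Y) {m : SimplexCategory}
    (e : X.obj (op ⦋1⦌, op ⦋0⦌)) :
    eConst m e ≫ f = eConst m (fApp f e) := by
  rw [eConst, eConst, Category.assoc, yonedaBox_comp]

/-- `(B \ X)^e`: the simplicial set of `B`-shaped diagrams in `X` whose restriction along the
edge `ι : Δ[1] ⟶ B` is constant at the edge `e ∈ X_{1,0}`. -/
def fib {B : SSet.{0}} (ι : Δ[1] ⟶ B) (X : BSSet) (e : X.obj (op ⦋1⦌, op ⦋0⦌)) :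
    SSet.{0} where
  obj n := { σ : boxObj B (SSet.stdSimplex.obj n.unop) ⟶ X //
      boxMap ι (𝟙 _) ≫ σ = eConst n.unop e }
  map {n m} φ := TypeCat.ofHom fun σ => ⟨boxMap (𝟙 B) (SSet.stdSimplex.map φ.unop) ≫ σ.1, by
    rw [← Category.assoc,
      show boxMap ι (𝟙 _) ≫ boxMap (𝟙 B) (SSet.stdSimplex.map φ.unop)
        = boxMap (𝟙 Δ[1]) (SSet.stdSimplex.map φ.unop) ≫ boxMap ι (𝟙 _) from rfl,
      Category.assoc, σ.2, eConst_whisker]⟩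
  map_id n := by
    apply ConcreteCategory.hom_ext
    intro σ
    apply Subtype.ext
    show boxMap (𝟙 B) (SSet.stdSimplex.map (𝟙 n.unop)) ≫ σ.1 = σ.1
    rw [CategoryTheory.Functor.map_id (self := SSet.stdSimplex), boxMap_id, Category.id_comp]
  map_comp {n m k} φ ψ := by
    apply ConcreteCategory.hom_ext
    intro σ
    apply Subtype.ext
    show boxMap (𝟙 B) (SSet.stdSimplex.map (ψ.unop ≫ φ.unop)) ≫ σ.1 = _
    rw [Functor.map_comp (self := SSet.stdSimplex), boxMapR_comp, Category.assoc]
    rfl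

/-- The forgetful map `(B \ X)^e ⟶ B \ X`. -/
def fibFst {B : SSet.{0}} (ι : Δ[1] ⟶ B) (X : BSSet) (e : X.obj (op ⦋1⦌, op ⦋0⦌)) :
    fib ι X e ⟶ under B X where
  app n := TypeCat.ofHom fun σ => σ.1
  naturality n m φ := rfl

/-- Restriction `(B' \ X)^e ⟶ (B \ X)^e` along `u : B ⟶ B'`. -/
def fibRes {B B' : SSet.{0}} (u : B ⟶ B') (ι : Δ[1] ⟶ B) (X : BSSet)
    (e : X.obj (op ⦋1⦌, op ⦋0⦌)) :
    fib (ι ≫ u) X e ⟶ fib ι X e where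
  app n := TypeCat.ofHom fun σ => ⟨boxMap u (𝟙 _) ≫ σ.1, by
    rw [← Category.assoc,
      show boxMap ι (𝟙 _) ≫ boxMap u (𝟙 _) = boxMap (ι ≫ u) (𝟙 _) from rfl, σ.2]⟩
  naturality n m φ := rfl

/-- Pushforward `(B \ X)^e ⟶ (B \ Y)^{f(e)}` along `f : X ⟶ Y`. -/
def fibPush {B : SSet.{0}} (ι : Δ[1] ⟶ B) {X Y : BSSet} (f : X ⟶ Y)
    (e : X.obj (op ⦋1⦌, op ⦋0⦌)) :
    fib ι X e ⟶ fib ι Y (fApp f e) where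
  app n := TypeCat.ofHom fun σ => ⟨σ.1 ≫ f, by rw [← Category.assoc, σ.2, eConst_comp]⟩
  naturality n m φ := rfl

lemma fibSq {B B' : SSet.{0}} (u : B ⟶ B') (ι : Δ[1] ⟶ B) {X Y : BSSet} (f : X ⟶ Y)
    (e : X.obj (op ⦋1⦌, op ⦋0⦌)) :
    fibRes u ι X e ≫ fibPush ι f e = fibPush (ι ≫ u) f e ≫ fibRes u ι Y (fApp f e) := rfl

/-- The given square of fibered diagram spaces (restriction on top of pushforward)
is a homotopy pullback. -/
noncomputable def IsCocartAlong {B B' : SSet.{0}} (u : B ⟶ B') (ι : Δ[1] ⟶ B)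
    {X Y : BSSet} (f : X ⟶ Y) (e : X.obj (op ⦋1⦌, op ⦋0⦌)) : Prop :=
  IsHomotopyPullback (fibRes u ι X e) (fibPush (ι ≫ u) f e)
    (fibPush ι f e) (fibRes u ι Y (fApp f e)) (fibSq u ι f e)

/-- The gap map `(B' \ X)^e ⟶ (B \ X)^e ×_{(B \ Y)^{f(e)}} (B' \ Y)^{f(e)}`. -/
noncomputable def fibGap {B B' : SSet.{0}} (u : B ⟶ B') (ι : Δ[1] ⟶ B) {X Y : BSSet}
    (f : X ⟶ Y) (e : X.obj (op ⦋1⦌, op ⦋0⦌)) :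
    fib (ι ≫ u) X e ⟶ pullback (fibPush ι f e) (fibRes u ι Y (fApp f e)) :=
  pullback.lift (fibRes u ι X e) (fibPush (ι ≫ u) f e) (fibSq u ι f e)

/-- The morphism `⦋1⦌ ⟶ ⦋n⦌` in the simplex category given by `0 ↦ 0`, `1 ↦ 1`. -/
def edge01Hom (n : ℕ) (h : 1 ≤ n) : (⦋1⦌ : SimplexCategory) ⟶ ⦋n⦌ :=
  SimplexCategory.Hom.mk ⟨Fin.castLE (by simp only [SimplexCategory.len_mk]; omega),
    (Fin.strictMono_castLE _).monotone⟩

/-- The edge `Δ^{0,1} ⟶ Δⁿ`. -/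
def edge01 (n : ℕ) (h : 1 ≤ n) : Δ[1] ⟶ Δ[n] :=
  SSet.stdSimplex.map (edge01Hom n h)

/-- The edge `Δ^{0,1} ⟶ Λ[n, 0]` of the left horn. -/
def edgeHorn (n : ℕ) (h : 2 ≤ n) : Δ[1] ⟶ (Λ[n, 0] : SSet) where
  app m := TypeCat.ofHom fun a => ⟨(edge01 n (by omega)).app m a, by
    rw [SSet.mem_horn_iff]
    intro hEq
    have h2 : (⟨2, by omega⟩ : Fin (n + 1)) ∈
        Set.range (SSet.stdSimplex.asOrderHom ((edge01 n (by omega)).app m a)) ∪ {0} := by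
      rw [hEq]; exact Set.mem_univ _
    rcases h2 with ⟨j, hj⟩ | h0
    · have hsmall : ((SSet.stdSimplex.asOrderHom ((edge01 n (by omega)).app m a)) j : ℕ) < 2 :=
        ((SSet.stdSimplex.asOrderHom a) j).isLt
      have hv : ((SSet.stdSimplex.asOrderHom ((edge01 n (by omega)).app m a)) j : ℕ) = 2 :=
        congrArg Fin.val hj
      omega
    · rw [Set.mem_singleton_iff] at h0
      have := congrArg Fin.val h0
      simp at this⟩
  naturality m m' φ := by
    apply ConcreteCategory.hom_ext
    intro a
    apply Subtype.ext
    exact types_congr_hom ((edge01 n (by omega)).naturality φ) a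

lemma edgeHorn_incl (n : ℕ) (h : 2 ≤ n) :
    edgeHorn n h ≫ Λ[n, 0].ι = edge01 n (by omega) := rfl

/-- A morphism `e ∈ X_{1,0}` is `f`-cocartesian if the square
`(Δ² \ X)^e → (Λ²₀ \ X)^e` over `(Δ² \ Y)^{f(e)} → (Λ²₀ \ Y)^{f(e)}` is a homotopy
pullback. -/
noncomputable def IsCocartesianEdge {X Y : BSSet} (f : X ⟶ Y)
    (e : X.obj (op ⦋1⦌, op ⦋0⦌)) : Prop :=
  IsCocartAlong (Λ[2, 0].ι) (edgeHorn 2 (by omega)) f e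

/-- Abbreviation for `op [k]`. -/
abbrev sc (k : ℕ) : SimplexCategoryᵒᵖ := op (SimplexCategory.mk k)

lemma fibFst_push {B : SSet.{0}} (ι : Δ[1] ⟶ B) {X Y : BSSet} (f : X ⟶ Y)
    (e : X.obj (op ⦋1⦌, op ⦋0⦌)) :
    fibFst ι X e ≫ underPush B f = fibPush ι f e ≫ fibFst ι Y (fApp f e) := rfl

lemma fibFst_whisker {B B' : SSet.{0}} (u : B ⟶ B') (ι : Δ[1] ⟶ B) (X : BSSet)
    (e : X.obj (op ⦋1⦌, op ⦋0⦌)) :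
    fibFst (ι ≫ u) X e ≫ underWhisker u X = fibRes u ι X e ≫ fibFst ι X e := rfl

/-- The forgetful map
`(B' \ Y)^{f(e)} ×_{(B \ Y)^{f(e)}} (B \ X)^e ⟶ B' \ Y ×_{B \ Y} B \ X`
(with the pullbacks written in the other order). -/
noncomputable def fibForget {B B' : SSet.{0}} (u : B ⟶ B') (ι : Δ[1] ⟶ B) {X Y : BSSet}
    (f : X ⟶ Y) (e : X.obj (op ⦋1⦌, op ⦋0⦌)) :
    pullback (fibPush ι f e) (fibRes u ι Y (fApp f e)) ⟶
      pullback (underPush B f) (underWhisker u Y) :=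
  pullback.lift
    (pullback.fst _ _ ≫ fibFst ι X e)
    (pullback.snd _ _ ≫ fibFst (ι ≫ u) Y (fApp f e))
    (by
      rw [Category.assoc, Category.assoc, fibFst_push, fibFst_whisker,
        ← Category.assoc, ← Category.assoc, pullback.condition])

/-- The left spine `Lₙ ⊆ Δⁿ`: the union of the edge `Δ^{0,1}` with the spine
`Δ^{0,2} ∪ Δ^{2,3} ∪ ⋯ ∪ Δ^{n-1,n}` of the face `d₁Δⁿ`. -/
def leftSpine (n : ℕ) : SSet.{0} where
  obj m := { a : Δ[n].obj m //
    (∀ j, ((SSet.stdSimplex.asOrderHom a) j : ℕ) ≤ 1) ∨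
    (∀ j, ((SSet.stdSimplex.asOrderHom a) j : ℕ) = 0 ∨ ((SSet.stdSimplex.asOrderHom a) j : ℕ) = 2) ∨
    (∃ i : ℕ, 2 ≤ i ∧
      ∀ j, ((SSet.stdSimplex.asOrderHom a) j : ℕ) = i ∨ ((SSet.stdSimplex.asOrderHom a) j : ℕ) = i + 1) }
  map {m m'} φ := TypeCat.ofHom fun a => ⟨Δ[n].map φ a.1, by
    rcases a.2 with h | h | ⟨i, h2, h⟩
    exacts [Or.inl fun j => h _, Or.inr (Or.inl fun j => h _),
      Or.inr (Or.inr ⟨i, h2, fun j => h _⟩)]⟩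
  map_id m := by
    apply ConcreteCategory.hom_ext
    intro a
    apply Subtype.ext
    show Δ[n].map (𝟙 m) a.1 = a.1
    simp
  map_comp φ ψ := by
    apply ConcreteCategory.hom_ext
    intro a
    apply Subtype.ext
    show Δ[n].map (φ ≫ ψ) a.1 = Δ[n].map ψ (Δ[n].map φ a.1)
    simp

def leftSpineIncl (n : ℕ) : leftSpine n ⟶ Δ[n] where
  app m := TypeCat.ofHom fun a => a.1
  naturality m m' φ := rfl

/-- The edge `Δ^{0,1} ⟶ Lₙ`. -/
def edgeLeftSpine (n : ℕ) (h : 1 ≤ n) : Δ[1] ⟶ leftSpine n where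
  app m := TypeCat.ofHom fun a => ⟨(edge01 n h).app m a,
    Or.inl fun j => Nat.lt_succ_iff.mp ((SSet.stdSimplex.asOrderHom a) j).isLt⟩
  naturality m m' φ := by
    apply ConcreteCategory.hom_ext
    intro a
    apply Subtype.ext
    exact types_congr_hom ((edge01 n h).naturality φ) a

lemma edgeLeftSpine_incl (n : ℕ) (h : 1 ≤ n) :
    edgeLeftSpine n h ≫ leftSpineIncl n = edge01 n h := rfl

/-- The `m`-th column `X_m` of a bisimplicial set, as a simplicial set. -/
def col (X : BSSet) (m : SimplexCategory) : SSet.{0} where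
  obj n := X.obj (op m, n)
  map {n n'} g := TypeCat.ofHom fun x => X.map (𝟙 (op m), g) x
  map_id n := by
    apply ConcreteCategory.hom_ext
    intro x
    exact FunctorToTypes.map_id_apply X x
  map_comp {n n' n''} g h := by
    apply ConcreteCategory.hom_ext
    intro x
    exact FunctorToTypes.map_comp_apply X
      ((𝟙 (op m), g) : (op m, n) ⟶ (op m, n'))
      ((𝟙 (op m), h) : (op m, n') ⟶ (op m, n'')) x

/-- Horizontal face of an edge `e ∈ X_{1,0}`: `hface 1 e` is the source vertex and
`hface 0 e` the target vertex. -/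
def hface {X : BSSet} (i : Fin 2) (e : X.obj (op ⦋1⦌, op ⦋0⦌)) : X.obj (op ⦋0⦌, op ⦋0⦌) :=
  X.map ((((SimplexCategory.δ i).op : sc 1 ⟶ sc 0), 𝟙 (sc 0)) :
    (sc 1, sc 0) ⟶ (sc 0, sc 0)) e

/-- The degenerate (identity) edge on a vertex `x ∈ X_{0,0}`. -/
def hdegen {X : BSSet} (x : X.obj (op ⦋0⦌, op ⦋0⦌)) : X.obj (op ⦋1⦌, op ⦋0⦌) :=
  X.map ((((SimplexCategory.σ 0).op : sc 0 ⟶ sc 1), 𝟙 (sc 0)) :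
    (sc 0, sc 0) ⟶ (sc 1, sc 0)) x

/-- Vertical face of `h ∈ X_{1,1}`: `vface 1 h` and `vface 0 h` are the two endpoints of the
path `h` in the space `X_1`. -/
def vface {X : BSSet} (i : Fin 2) (h : X.obj (op ⦋1⦌, op ⦋1⦌)) : X.obj (op ⦋1⦌, op ⦋0⦌) :=
  X.map ((𝟙 (sc 1), ((SimplexCategory.δ i).op : sc 1 ⟶ sc 0)) :
    (sc 1, sc 1) ⟶ (sc 1, sc 0)) h

/-- Horizontal faces of a `2`-simplex `τ ∈ X_{2,0}`. -/
def hface2 {X : BSSet} (i : Fin 3) (τ : X.obj (op ⦋2⦌, op ⦋0⦌)) : X.obj (op ⦋1⦌, op ⦋0⦌) :=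
  X.map ((((SimplexCategory.δ i).op : sc 2 ⟶ sc 1), 𝟙 (sc 0)) :
    (sc 2, sc 0) ⟶ (sc 1, sc 0)) τ

/-- Two edges are connected by a path in the space `X_1` . -/
def PathConn (X : BSSet) : X.obj (op ⦋1⦌, op ⦋0⦌) → X.obj (op ⦋1⦌, op ⦋0⦌) → Prop :=
  Relation.EqvGen (fun e e' => ∃ h : X.obj (op ⦋1⦌, op ⦋1⦌), vface 1 h = e ∧ vface 0 h = e')

/-- A homotopy equivalence in a Segal space, in the sense of Rezk: an edge admitting a right
inverse and a left inverse up to homotopy. -/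
def IsHomotopyEquivalenceEdge (X : BSSet) (e : X.obj (op ⦋1⦌, op ⦋0⦌)) : Prop :=
  (∃ (g : X.obj (op ⦋1⦌, op ⦋0⦌)) (τ : X.obj (op ⦋2⦌, op ⦋0⦌)),
    hface2 2 τ = g ∧ hface2 0 τ = e ∧ PathConn X (hface2 1 τ) (hdegen (hface 1 g))) ∧
  (∃ (g' : X.obj (op ⦋1⦌, op ⦋0⦌)) (τ' : X.obj (op ⦋2⦌, op ⦋0⦌)),
    hface2 2 τ' = e ∧ hface2 0 τ' = g' ∧ PathConn X (hface2 1 τ') (hdegen (hface 1 e)))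

/-- A cocartesian edge in the quasicategorical sense, for a map `π : C ⟶ D` of simplicial
sets: all left horns (for `n ≥ 2`) whose initial edge is `c`, together with a filler
downstairs, can be filled upstairs. -/
def QCocartesianEdge {C D : SSet.{0}} (π : C ⟶ D) (c : C.obj (op ⦋1⦌)) : Prop :=
  ∀ (n : ℕ) (hn : 2 ≤ n) (g : (Λ[n, 0] : SSet) ⟶ C) (d : Δ[n] ⟶ D),
    SSet.yonedaEquiv (edgeHorn n hn ≫ g) = c →
    g ≫ π = Λ[n, 0].ι ≫ d →
    ∃ h : Δ[n] ⟶ C, Λ[n, 0].ι ≫ h = g ∧ h ≫ π = d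

/-- A cocartesian fibration of quasicategories: an inner fibration such that every edge
downstairs with a lift of its source admits a cocartesian lift. -/
def IsQCocartesianFibration {C D : SSet.{0}} (π : C ⟶ D) : Prop :=
  IsInnerFibration π ∧
  ∀ (σ : D.obj (op ⦋1⦌)) (x : C.obj (op ⦋0⦌)),
    π.app (op ⦋0⦌) x = D.map (SimplexCategory.δ 1).op σ →
    ∃ c : C.obj (op ⦋1⦌), QCocartesianEdge π c ∧ π.app (op ⦋1⦌) c = σ ∧
      C.map (SimplexCategory.δ 1).op c = x

/-- A cocartesian fibration between Segal spaces: a Reedy fibration such that every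
morphism of `Y` with a lift of its source vertex admits an `f`-cocartesian lift. -/
noncomputable def IsCocartesianFibration {X Y : BSSet} (f : X ⟶ Y) : Prop :=
  IsReedyFibration f ∧
  ∀ (σ : Y.obj (op ⦋1⦌, op ⦋0⦌)) (x : X.obj (op ⦋0⦌, op ⦋0⦌)),
    f.app (op ⦋0⦌, op ⦋0⦌) x = hface 1 σ →
    ∃ e : X.obj (op ⦋1⦌, op ⦋0⦌), IsCocartesianEdge f e ∧ fApp f e = σ ∧ hface 1 e = x

/-- The identity `m`-simplex of the standard simplex `Δ^m`. -/
def idSimplex (m : SimplexCategory) : (SSet.stdSimplex.{0}.obj m).obj (op m) :=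
  (SSet.stdSimplex.objEquiv (n := m) (m := op m)).symm (𝟙 m)

/-- A marked simplicial set: a simplicial set together with a set of marked edges
containing all degenerate edges. -/
structure MSSet : Type 1 where
  carrier : SSet.{0}
  marked : Set (carrier.obj (op ⦋1⦌))
  degen_marked : ∀ x : carrier.obj (op ⦋0⦌),
    carrier.map ((SimplexCategory.σ 0).op : sc 0 ⟶ sc 1) x ∈ marked

instance : Category MSSet where
  Hom A B := { g : A.carrier ⟶ B.carrier // ∀ a ∈ A.marked, g.app (op ⦋1⦌) a ∈ B.marked }
  id A := ⟨𝟙 A.carrier, fun _ ha => ha⟩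
  comp f g := ⟨f.1 ≫ g.1, fun a ha => g.2 _ (f.2 a ha)⟩
  id_comp f := Subtype.ext (Category.id_comp _)
  comp_id f := Subtype.ext (Category.comp_id _)
  assoc f g h := Subtype.ext (Category.assoc _ _ _)

/-- A marked bisimplicial set: a bisimplicial set together with a set of marked edges in
`X_{1,0}` containing all degenerate edges. -/
structure MBSSet : Type 1 where
  carrier : BSSet
  marked : Set (carrier.obj (op ⦋1⦌, op ⦋0⦌))
  degen_marked : ∀ x : carrier.obj (op ⦋0⦌, op ⦋0⦌), hdegen x ∈ marked

instance : Category MBSSet where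
  Hom X Y := { g : X.carrier ⟶ Y.carrier //
    ∀ a ∈ X.marked, g.app (op ⦋1⦌, op ⦋0⦌) a ∈ Y.marked }
  id X := ⟨𝟙 X.carrier, fun _ ha => ha⟩
  comp f g := ⟨f.1 ≫ g.1, fun a ha => g.2 _ (f.2 a ha)⟩
  id_comp f := Subtype.ext (Category.id_comp _)
  comp_id f := Subtype.ext (Category.comp_id _)
  assoc f g h := Subtype.ext (Category.assoc _ _ _)

/-- The marked box product `A □ B` of a marked simplicial set and a simplicial set:
an edge `(a, b) ∈ A₁ × B₀` is marked iff `a` is marked. -/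
def mBoxObj (A : MSSet) (B : SSet.{0}) : MBSSet where
  carrier := boxObj A.carrier B
  marked := { z | z.1 ∈ A.marked }
  degen_marked x := A.degen_marked x.1

/-- The marked division `A \ X`: its `n`-simplices are the marked maps `A □ Δⁿ ⟶ X`. -/
def mUnder (A : MSSet) (X : MBSSet) : SSet.{0} where
  obj n := { σ : boxObj A.carrier (SSet.stdSimplex.obj n.unop) ⟶ X.carrier //
      ∀ a ∈ A.marked, ∀ b, σ.app (op ⦋1⦌, op ⦋0⦌) (a, b) ∈ X.marked }
  map {n m} φ := TypeCat.ofHom fun σ =>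
    ⟨boxMap (𝟙 A.carrier) (SSet.stdSimplex.map φ.unop) ≫ σ.1,
      fun a ha b => σ.2 a ha _⟩
  map_id n := by
    apply ConcreteCategory.hom_ext
    intro σ
    apply Subtype.ext
    show boxMap (𝟙 A.carrier) (SSet.stdSimplex.map (𝟙 n.unop)) ≫ σ.1 = σ.1
    rw [CategoryTheory.Functor.map_id (self := SSet.stdSimplex), boxMap_id, Category.id_comp]
  map_comp {n m k} φ ψ := by
    apply ConcreteCategory.hom_ext
    intro σ
    apply Subtype.ext
    show boxMap (𝟙 A.carrier) (SSet.stdSimplex.map (ψ.unop ≫ φ.unop)) ≫ σ.1 = _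
    rw [Functor.map_comp (self := SSet.stdSimplex), boxMapR_comp, Category.assoc]
    rfl

/-- Restriction of marked divisions along a map of marked simplicial sets. -/
def mUnderWhisker {A A' : MSSet} (u : A ⟶ A') (X : MBSSet) :
    mUnder A' X ⟶ mUnder A X where
  app n := TypeCat.ofHom fun σ => ⟨boxMap u.1 (𝟙 _) ≫ σ.1, fun a ha b => σ.2 _ (u.2 a ha) b⟩
  naturality n m φ := rfl

/-- Pushforward of marked divisions along a map of marked bisimplicial sets. -/
def mUnderPush (A : MSSet) {X Y : MBSSet} (f : X ⟶ Y) :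
    mUnder A X ⟶ mUnder A Y where
  app n := TypeCat.ofHom fun σ => ⟨σ.1 ≫ f.1, fun a ha b => f.2 _ (σ.2 a ha b)⟩
  naturality n m φ := rfl

lemma mUnderSq {A A' : MSSet} (u : A ⟶ A') {X Y : MBSSet} (f : X ⟶ Y) :
    mUnderWhisker u X ≫ mUnderPush A f = mUnderPush A' f ≫ mUnderWhisker u Y := rfl

/-- The gap map `⟨u \ f⟩` for marked divisions. -/
noncomputable def mUnderGap {A A' : MSSet} (u : A ⟶ A') {X Y : MBSSet} (f : X ⟶ Y) :
    mUnder A' X ⟶ pullback (mUnderPush A f) (mUnderWhisker u Y) :=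
  pullback.lift (mUnderWhisker u X) (mUnderPush A' f) (mUnderSq u f)

/-- The marked slice `X / B`: underlying simplicial set `X̊ / B`, an edge being marked iff
it sends each pair `(id₁, b)` to a marked edge of `X`. -/
def mOver (X : MBSSet) (B : SSet.{0}) : MSSet where
  carrier := over' X.carrier B
  marked := setOf fun σ : (over' X.carrier B).obj (op ⦋1⦌) =>
      ∀ b : B.obj (op ⦋0⦌), NatTrans.app σ (op ⦋1⦌, op ⦋0⦌) (idSimplex ⦋1⦌, b) ∈ X.marked
  degen_marked x := by
    intro b
    have h := types_congr_hom
      (x.naturality ((((SimplexCategory.σ 0).op : sc 0 ⟶ sc 1), 𝟙 (sc 0)) :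
        (sc 0, sc 0) ⟶ (sc 1, sc 0))) (idSimplex ⦋0⦌, b)
    simp only [types_comp_apply, boxObj_map, FunctorToTypes.map_id_apply] at h
    exact Set.mem_of_eq_of_mem h (X.degen_marked _)

/-- Pushforward of marked slices. -/
def mOverPush (B : SSet.{0}) {X Y : MBSSet} (f : X ⟶ Y) :
    mOver X B ⟶ mOver Y B :=
  ⟨overPush B f.1, by
    intro σ hσ b
    exact f.2 _ (hσ b)⟩

/-- The functor `A □ - : SSet ⥤ MBSSet` for a marked simplicial set `A`. -/
def mBoxLFunctor (A : MSSet) : SSet.{0} ⥤ MBSSet where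
  obj B := mBoxObj A B
  map v := ⟨boxMap (𝟙 A.carrier) v, fun z hz => hz⟩
  map_id B := Subtype.ext rfl
  map_comp v w := Subtype.ext rfl

/-- The functor `A \ - : MBSSet ⥤ SSet` for a marked simplicial set `A`. -/
def mUnderFunctor (A : MSSet) : MBSSet ⥤ SSet.{0} where
  obj X := mUnder A X
  map f := mUnderPush A f
  map_id X := by
    apply NatTrans.ext
    funext n
    apply ConcreteCategory.hom_ext
    intro σ
    exact Subtype.ext (Category.comp_id _)
  map_comp f g := rfl

/-- The functor `- □ B : MSSet ⥤ MBSSet` for a simplicial set `B`. -/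
def mBoxRFunctor (B : SSet.{0}) : MSSet ⥤ MBSSet where
  obj A := mBoxObj A B
  map u := ⟨boxMap u.1 (𝟙 B), fun z hz => u.2 z.1 hz⟩
  map_id A := Subtype.ext rfl
  map_comp u v := Subtype.ext rfl

/-- The functor `- / B : MBSSet ⥤ MSSet` for a simplicial set `B`. -/
def mOverFunctor (B : SSet.{0}) : MBSSet ⥤ MSSet where
  obj X := mOver X B
  map f := mOverPush B f
  map_id X := by
    apply Subtype.ext
    apply NatTrans.ext
    funext n
    apply ConcreteCategory.hom_ext
    intro σ
    exact Category.comp_id σ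
  map_comp f g := rfl

/-- The vertex `v` of a simplex. -/
def vertexOf {S : SSet.{0}} {n : SimplexCategoryᵒᵖ} (σ : S.obj n)
    (v : Fin (n.unop.len + 1)) : S.obj (op ⦋0⦌) :=
  S.map (Quiver.Hom.op
    (SimplexCategory.Hom.mk (OrderHom.const _ v) : (⦋0⦌ : SimplexCategory) ⟶ n.unop)) σ

/-- A full inclusion of simplicial sets: a levelwise injection such that any simplex all of
whose vertices lie in the image itself lies in the image. -/
def IsFullInclusion {S T : SSet.{0}} (j : S ⟶ T) : Prop :=
  (∀ n, Function.Injective (j.app n)) ∧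
  ∀ (n : SimplexCategoryᵒᵖ) (σ : T.obj n),
    (∀ v : Fin (n.unop.len + 1), vertexOf σ v ∈ Set.range (j.app (op ⦋0⦌))) →
    σ ∈ Set.range (j.app n)

/-- The inclusion `A \ X ⟶ Å \ X̊` of the marked division into the unmarked one. -/
def mUnderIncl (A : MSSet) (X : MBSSet) : mUnder A X ⟶ under A.carrier X.carrier where
  app n := TypeCat.ofHom fun σ => σ.1
  naturality n m φ := rfl

/-- A marking on a marked bisimplicial set respects path components if for every edge
`e → e'` in the space `X₁`, `e` is marked iff `e'` is marked. -/
def MarkingRespectsPathComponents (X : MBSSet) : Prop :=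
  ∀ h : X.carrier.obj (op ⦋1⦌, op ⦋1⦌), (vface 1 h ∈ X.marked ↔ vface 0 h ∈ X.marked)

/-- The `ℒ`-marking on a simplicial set `B` equipped with an edge `ι : Δ¹ ⟶ B`: the only
marked edges are the degenerate ones and (the image of) `ι`. -/
def mkL (B : SSet.{0}) (ι : Δ[1] ⟶ B) : MSSet where
  carrier := B
  marked := Set.range (B.map ((SimplexCategory.σ 0).op : sc 0 ⟶ sc 1)) ∪
    {ι.app (op ⦋1⦌) (idSimplex ⦋1⦌)}
  degen_marked x := Or.inl ⟨x, rfl⟩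

/-- A map between `ℒ`-marked simplicial sets preserving the distinguished edges. -/
def mkLHom {A B : SSet.{0}} (i : A ⟶ B) (ιA : Δ[1] ⟶ A) (ιB : Δ[1] ⟶ B)
    (h : ιA ≫ i = ιB) : mkL A ιA ⟶ mkL B ιB :=
  ⟨i, by
    rintro a (⟨x, rfl⟩ | ha)
    · exact Or.inl ⟨i.app _ x, (types_congr_hom (i.naturality _) x).symm⟩
    · right
      obtain rfl := Set.mem_singleton_iff.mp ha
      subst h
      exact rfl⟩

lemma eConst_app {X : BSSet} (m : SimplexCategory) (e : X.obj (op ⦋1⦌, op ⦋0⦌))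
    (b : (SSet.stdSimplex.{0}.obj m).obj (sc 0)) :
    (eConst m e).app (op ⦋1⦌, op ⦋0⦌) (idSimplex ⦋1⦌, b) = e := by
  show X.map ((SSet.stdSimplex.objEquiv (n := (⦋1⦌ : SimplexCategory)) (m := sc 1)
      (idSimplex ⦋1⦌)).op,
    (SSet.stdSimplex.objEquiv (n := (⦋0⦌ : SimplexCategory)) (m := sc 0)
      ((SSet.stdSimplex.map (toZero m)).app (sc 0) b)).op) e = e
  rw [show SSet.stdSimplex.objEquiv (n := (⦋1⦌ : SimplexCategory)) (m := sc 1) (idSimplex ⦋1⦌)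
      = 𝟙 (⦋1⦌ : SimplexCategory) from Equiv.apply_symm_apply _ _,
    toZero_unique (SSet.stdSimplex.objEquiv (n := (⦋0⦌ : SimplexCategory)) (m := sc 0)
      ((SSet.stdSimplex.map (toZero m)).app (sc 0) b)) (𝟙 (⦋0⦌ : SimplexCategory))]
  exact FunctorToTypes.map_id_apply X e

/-- The map from a fibered diagram space to the `ℒ`-marked division, well-defined when the
fixed edge `e` is marked. -/
def fibToMarked {B : SSet.{0}} (ι : Δ[1] ⟶ B) (X : MBSSet)
    (e : X.carrier.obj (op ⦋1⦌, op ⦋0⦌)) (he : e ∈ X.marked) :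
    fib ι X.carrier e ⟶ mUnder (mkL B ι) X where
  app n := TypeCat.ofHom fun σ => ⟨σ.1, by
    rintro a (⟨x, rfl⟩ | ha) b
    · have h := types_congr_hom
        (σ.1.naturality ((((SimplexCategory.σ 0).op : sc 0 ⟶ sc 1), 𝟙 (sc 0)) :
          (sc 0, sc 0) ⟶ (sc 1, sc 0))) (x, b)
      simp only [types_comp_apply, boxObj_map, FunctorToTypes.map_id_apply] at h
      exact Set.mem_of_eq_of_mem h (X.degen_marked _)
    · obtain rfl := Set.mem_singleton_iff.mp ha
      have h := types_congr_hom (congrArg (fun τ => NatTrans.app τ (sc 1, sc 0)) σ.2)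
        (idSimplex ⦋1⦌, b)
      exact Set.mem_of_eq_of_mem (h.trans (eConst_app _ e b)) he⟩
  naturality n m φ := rfl

section Saturation

universe v u
variable {C : Type u} [Category.{v} C]

/-- `f` is a retract of `g` in the arrow category. -/
def IsRetractOfArrow {X Y A B : C} (f : X ⟶ Y) (g : A ⟶ B) : Prop :=
  ∃ (iX : X ⟶ A) (rX : A ⟶ X) (iY : Y ⟶ B) (rY : B ⟶ Y),
    iX ≫ rX = 𝟙 X ∧ iY ≫ rY = 𝟙 Y ∧ iX ≫ g = f ≫ iY ∧ g ≫ rY = rX ≫ f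

/-- Stability of a class of morphisms under retracts. -/
def StableUnderRetracts (T : MorphismProperty C) : Prop :=
  ∀ ⦃X Y A B : C⦄ (f : X ⟶ Y) (g : A ⟶ B), IsRetractOfArrow f g → T g → T f

/-- Stability of a class of morphisms under pushouts (cobase change). -/
def StableUnderPushouts (T : MorphismProperty C) : Prop :=
  ∀ ⦃X Y X' Y' : C⦄ (s : X ⟶ X') (f : X ⟶ Y) (f' : X' ⟶ Y') (t : Y ⟶ Y'),
    IsPushout s f f' t → T f → T f'

/-- The inclusion functor of an initial segment of a preorder. -/
def iioIncl {J : Type} [Preorder J] (j : J) : Set.Iio j ⥤ J :=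
  Monotone.functor (f := fun i => (i : J)) (fun _ _ h => h)

/-- The canonical cocone on `F.obj j` over the restriction of a chain `F` to `Set.Iio j`. -/
def chainCocone {J : Type} [Preorder J] (F : J ⥤ C) (j : J) :
    Limits.Cocone (iioIncl j ⋙ F) where
  pt := F.obj j
  ι :=
    { app := fun i => F.map (homOfLE (le_of_lt i.2))
      naturality := by
        intro i i' g
        dsimp [iioIncl, Monotone.functor]
        rw [Category.comp_id, ← F.map_comp]
        congr 1 }

/-- Stability of a class of morphisms under transfinite composition: for every continuous
chain indexed by a well-ordered set all of whose successor maps lie in `T`, the composite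
map from the bottom object to the colimit lies in `T`. -/
def StableUnderTransfiniteCompositions (T : MorphismProperty C) : Prop :=
  ∀ (J : Type) [LinearOrder J] [OrderBot J] [SuccOrder J] [WellFoundedLT J]
    (F : J ⥤ C) (c : Limits.Cocone F), Limits.IsColimit c →
    (∀ j : J, ¬IsMax j → T (F.map (homOfLE (Order.le_succ j)))) →
    (∀ j : J, Order.IsSuccLimit j → Nonempty (Limits.IsColimit (chainCocone F j))) →
    T (c.ι.app ⊥)

/-- A saturated class of morphisms: one stable under pushouts, retracts and transfinite
composition. -/
def IsSaturatedClass (T : MorphismProperty C) : Prop :=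
  StableUnderPushouts T ∧ StableUnderRetracts T ∧ StableUnderTransfiniteCompositions T

/-- `f` lies in the saturated hull of the class `S`: it belongs to every saturated class
containing `S`. -/
def InSaturatedHull (S : MorphismProperty C) {X Y : C} (f : X ⟶ Y) : Prop :=
  ∀ T : MorphismProperty C, IsSaturatedClass T → S ≤ T → T f

end Saturation

/-- The class of inner horn inclusions `Λ[n, i] ⟶ Δ[n]`, `0 < i < n` (closed under
isomorphism of arrows). -/
def innerHornClass : MorphismProperty SSet.{0} := fun _ _ f =>
  ∃ (n : ℕ) (i : Fin (n + 1)), 0 < (i : ℕ) ∧ (i : ℕ) < n ∧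
    Nonempty (Arrow.mk f ≅ Arrow.mk (Λ[n, i].ι))

/-- A map of simplicial sets is inner anodyne if it lies in the saturated hull of the inner
horn inclusions. -/
def IsInnerAnodyne {A B : SSet.{0}} (v : A ⟶ B) : Prop :=
  InSaturatedHull innerHornClass v

/-- The flat marking: only degenerate edges are marked. -/
def flatM (A : SSet.{0}) : MSSet :=
  ⟨A, Set.range (A.map ((SimplexCategory.σ 0).op : sc 0 ⟶ sc 1)), fun x => ⟨x, rfl⟩⟩

/-- A map of simplicial sets as a map of flat-marked simplicial sets. -/
def flatHom {A B : SSet.{0}} (v : A ⟶ B) : flatM A ⟶ flatM B :=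
  ⟨v, by
    rintro a ⟨x, rfl⟩
    exact ⟨v.app _ x, (types_congr_hom (v.naturality _) x).symm⟩⟩

/-!
The inclusion `Lₙ ⊆ Λⁿ₀` is built up by attaching the missing faces of `Λⁿ₀` one at a time,
each one together with its face opposite to a chosen vertex. First come the faces of
`d₁Δⁿ` (those avoiding the vertex `1`), ordered by largest vertex and then by size, each glued
along the inner horn at its second largest vertex; then the faces containing `0` and `1`,
ordered by size, each glued along the left horn at `0`, whose marked edge is `{0, 1}`. Every
step is therefore a pushout of a flat inner horn inclusion or, by induction on `n`, of an
`ℒ`-marked left horn inclusion of smaller dimension, so `Lₙ^ℒ ⟶ (Λⁿ₀)^ℒ` lies in `T`. Its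
composite with `(Λⁿ₀)^ℒ ⟶ (Δⁿ)^ℒ` is the left spine inclusion, and right cancellation concludes.
-/

namespace IsSaturatedClass

universe v u
variable {C : Type u} [Category.{v} C] {T : MorphismProperty C}

lemma id_mem (hT : IsSaturatedClass T) (X : C) : T (𝟙 X) :=
  hT.2.2 (Fin 1) (ComposableArrows.mk₀ X) _
    (colimitOfDiagramTerminal (Fin.isTerminalLast 0) _)
    (fun j hj => (hj (Subsingleton.isMax j)).elim)
    (fun _ hj => (Order.not_isSuccLimit_of_isSuccArchimedean hj).elim)

lemma comp_mem (hT : IsSaturatedClass T) {X Y Z : C} {f : X ⟶ Y} {g : Y ⟶ Z}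
    (hf : T f) (hg : T g) : T (f ≫ g) :=
  hT.2.2 (Fin 3) (ComposableArrows.mk₂ f g) _
    (colimitOfDiagramTerminal (Fin.isTerminalLast 2) _)
    (fun j hj => by
      fin_cases j
      exacts [hf, hg, (hj isMax_top).elim])
    (fun _ hj => (Order.not_isSuccLimit_of_isSuccArchimedean hj).elim)

lemma iso_mem (hT : IsSaturatedClass T) {X Y : C} (e : X ≅ Y) : T e.hom :=
  hT.2.1 e.hom (𝟙 X) ⟨𝟙 X, 𝟙 X, e.inv, e.hom, by simp, by simp, by simp, by simp⟩ (hT.id_mem X)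

end IsSaturatedClass

namespace MSSet

lemma hom_ext {X Y : MSSet} {f g : X ⟶ Y} (h : f.1 = g.1) : f = g := Subtype.ext h

lemma isPushout_of_isPushout_carrier {A B C D : MSSet} {f : A ⟶ B} {g : A ⟶ C}
    {h : B ⟶ D} {k : C ⟶ D} (hP : IsPushout f.1 g.1 h.1 k.1)
    (hmarked : D.marked ⊆ h.1.app _ '' B.marked ∪ k.1.app _ '' C.marked) :
    IsPushout f g h k := by
  refine ⟨⟨hom_ext hP.w⟩, ⟨PushoutCocone.IsColimit.mk _
    (fun s => ⟨hP.desc s.inl.1 s.inr.1 (congrArg Subtype.val s.condition), ?_⟩)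
    (fun s => hom_ext (hP.inl_desc _ _ _)) (fun s => hom_ext (hP.inr_desc _ _ _))
    (fun s m h₁ h₂ => hom_ext (hP.hom_ext ?_ ?_))⟩⟩
  · intro e he
    obtain ⟨b, hb, rfl⟩ | ⟨c, hc, rfl⟩ := hmarked he
    · rw [← types_comp_apply (h.1.app _), ← NatTrans.comp_app, hP.inl_desc]
      exact s.inl.2 b hb
    · rw [← types_comp_apply (k.1.app _), ← NatTrans.comp_app, hP.inr_desc]
      exact s.inr.2 c hc
  · rw [hP.inl_desc]
    exact congrArg Subtype.val h₁
  · rw [hP.inr_desc]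
    exact congrArg Subtype.val h₂

lemma mkL_marked_subset {B C : MSSet} {D : SSet.{0}} {ι : Δ[1] ⟶ D}
    (h : B ⟶ mkL D ι) (k : C ⟶ mkL D ι)
    (hι : ι.app _ (idSimplex ⦋1⦌) ∈ h.1.app _ '' B.marked)
    (hvert : ∀ x : D.obj (op ⦋0⦌), x ∈ Set.range (h.1.app _) ∪ Set.range (k.1.app _)) :
    (mkL D ι).marked ⊆ h.1.app _ '' B.marked ∪ k.1.app _ '' C.marked := by
  rintro _ (⟨x, rfl⟩ | he)
  · obtain ⟨b, rfl⟩ | ⟨c, rfl⟩ := hvert x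
    · exact Or.inl ⟨_, B.degen_marked b, types_congr_hom (h.1.naturality _) b⟩
    · exact Or.inr ⟨_, C.degen_marked c, types_congr_hom (k.1.naturality _) c⟩
  · rw [Set.mem_singleton_iff.1 he]
    exact Or.inl hι

end MSSet

def flatToMkL {X D : SSet.{0}} (g : X ⟶ D) (ι : Δ[1] ⟶ D) : flatM X ⟶ mkL D ι :=
  ⟨g, by
    rintro _ ⟨x, rfl⟩
    exact Or.inl ⟨g.app _ x, (types_congr_hom (g.naturality _) x).symm⟩⟩

def mkLIso {X Y : SSet.{0}} (e : X ≅ Y) {ιX : Δ[1] ⟶ X} {ιY : Δ[1] ⟶ Y} (h : ιX ≫ e.hom = ιY) :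
    mkL X ιX ≅ mkL Y ιY where
  hom := mkLHom e.hom ιX ιY h
  inv := mkLHom e.inv ιY ιX (by rw [← h, Category.assoc, e.hom_inv_id, Category.comp_id])
  hom_inv_id := MSSet.hom_ext e.hom_inv_id
  inv_hom_id := MSSet.hom_ext e.inv_hom_id

lemma isInnerAnodyne_horn_ι {d : ℕ} (k : Fin (d + 1)) (hk₀ : 0 < k.val) (hkd : k.val < d) :
    IsInnerAnodyne Λ[d, k].ι :=
  fun _ _ hT => hT _ ⟨d, k, hk₀, hkd, ⟨Iso.refl _⟩⟩

def leftHornIncl (d : ℕ) (hd : 2 ≤ d) :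
    mkL Λ[d, 0] (edgeHorn d hd) ⟶ mkL Δ[d] (edge01 d (by omega)) :=
  mkLHom Λ[d, 0].ι (edgeHorn d hd) (edge01 d (by omega)) (edgeHorn_incl d hd)

section OrderEmbOfFin

variable {α : Type*} [LinearOrder α] {S : Finset α} {d : ℕ} (hS : S.card = d + 1)

lemma exists_orderEmbOfFin_eq_of_lt_of_lt {a p b : α} (ha : a ∈ S) (hp : p ∈ S) (hb : b ∈ S)
    (hap : a < p) (hpb : p < b) :
    ∃ k : Fin (d + 1), S.orderEmbOfFin hS k = p ∧ 0 < k.val ∧ k.val < d := by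
  have hrange := S.range_orderEmbOfFin hS
  obtain ⟨i, rfl⟩ : a ∈ Set.range (S.orderEmbOfFin hS) := hrange ▸ ha
  obtain ⟨k, rfl⟩ : p ∈ Set.range (S.orderEmbOfFin hS) := hrange ▸ hp
  obtain ⟨l, rfl⟩ : b ∈ Set.range (S.orderEmbOfFin hS) := hrange ▸ hb
  have hik := Fin.lt_def.1 ((S.orderEmbOfFin hS).lt_iff_lt.1 hap)
  have hkl := Fin.lt_def.1 ((S.orderEmbOfFin hS).lt_iff_lt.1 hpb)
  exact ⟨k, rfl, by omega, by omega⟩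

end OrderEmbOfFin

variable {n : ℕ}

lemma orderEmbOfFin_val_of_le_one {S : Finset (Fin (n + 1))} {d : ℕ} (hS : S.card = d + 1)
    (h0 : ∃ z ∈ S, z.val = 0) (h1 : ∃ o ∈ S, o.val = 1) (i : Fin (d + 1)) (hi : i.val ≤ 1) :
    (S.orderEmbOfFin hS i).val = i.val := by
  set e := S.orderEmbOfFin hS
  have hrange : Set.range e = S := S.range_orderEmbOfFin hS
  obtain ⟨iz, hiz⟩ : ∃ iz, (e iz).val = 0 := by
    obtain ⟨z, hz, hz0⟩ := h0
    obtain ⟨iz, rfl⟩ : z ∈ Set.range e := hrange ▸ hz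
    exact ⟨iz, hz0⟩
  obtain ⟨io, hio⟩ : ∃ io, (e io).val = 1 := by
    obtain ⟨o, ho, ho1⟩ := h1
    obtain ⟨io, rfl⟩ : o ∈ Set.range e := hrange ▸ ho
    exact ⟨io, ho1⟩
  have he0 : (e 0).val = 0 := by
    have := Fin.le_def.1 (e.monotone (Fin.zero_le iz))
    omega
  rcases Nat.le_one_iff_eq_zero_or_eq_one.1 hi with hi0 | hi1
  · rw [show i = 0 from Fin.ext hi0, he0, Fin.val_zero]
  · have hio0 : io.val ≠ 0 := fun h => by
      rw [show io = 0 from Fin.ext h] at hio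
      omega
    have := Fin.le_def.1 (e.monotone (show i ≤ io from Fin.le_def.2 (by omega)))
    have := Fin.lt_def.1 (e.strictMono (show 0 < i from Fin.lt_def.2 (by rw [Fin.val_zero]; omega)))
    omega

instance {d : ℕ} (f : ⦋d⦌ ⟶ ⦋n⦌) [Mono f] : Mono (SSet.stdSimplex.{0}.map f) := by
  rw [NatTrans.mono_iff_mono_app]
  intro m
  rw [mono_iff_injective]
  intro a b h
  apply SSet.stdSimplex.objEquiv.injective
  exact (cancel_mono f).1 (congrArg SSet.stdSimplex.objEquiv h)

def spanned (F : Set (Finset (Fin (n + 1)))) : (Δ[n] : SSet.{0}).Subcomplex :=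
  ⨆ M ∈ F, SSet.stdSimplex.face M

lemma mem_spanned_iff {F : Set (Finset (Fin (n + 1)))} {m : SimplexCategoryᵒᵖ}
    (a : Δ[n].obj m) :
    a ∈ (spanned F).obj m ↔ ∃ M ∈ F, ∀ j, SSet.stdSimplex.asOrderHom a j ∈ M := by
  simp only [spanned, Subfunctor.iSup_obj, SSet.stdSimplex.face_obj, Finset.top_eq_univ,
    Finset.image_subset_iff, Finset.mem_univ, forall_const, Set.mem_iUnion, Set.mem_ofPred_eq,
    exists_prop]
  rfl

lemma spanned_mono {F G : Set (Finset (Fin (n + 1)))} (h : F ⊆ G) : spanned F ≤ spanned G :=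
  biSup_mono h

lemma spanned_insert (F : Set (Finset (Fin (n + 1)))) (S : Finset (Fin (n + 1))) :
    spanned (insert S F) = SSet.stdSimplex.face S ⊔ spanned F :=
  iSup_insert

/-- The faces of `S` lying in `spanned F` are exactly those of the horn of `Δ[d] ≅ face S` at
the `k`-th vertex of `S`, so that `spanned (insert S F)` is obtained from `spanned F` by filling
that horn. -/
structure AttachesAlongHorn (F : Set (Finset (Fin (n + 1)))) (S : Finset (Fin (n + 1))) {d : ℕ}
    (hS : S.card = d + 1) (k : Fin (d + 1)) : Prop where
  exists_superset : ∀ x ∈ S, x ≠ S.orderEmbOfFin hS k → ∃ M ∈ F, S.erase x ⊆ M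
  not_subset : ∀ M ∈ F, ¬ S.erase (S.orderEmbOfFin hS k) ⊆ M

section Face

variable (S : Finset (Fin (n + 1))) {d : ℕ} (hS : S.card = d + 1)

def faceHom : ⦋d⦌ ⟶ ⦋n⦌ := SimplexCategory.mkHom (S.orderEmbOfFin hS).toOrderHom

instance : Mono (faceHom S hS) := by
  rw [SimplexCategory.mono_iff_injective]
  exact (S.orderEmbOfFin hS).injective

def faceMap : (Δ[d] : SSet.{0}) ⟶ Δ[n] := SSet.stdSimplex.map (faceHom S hS)

instance : Mono (faceMap S hS) := by
  unfold faceMap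
  infer_instance

lemma range_faceMap : SSet.Subcomplex.range (faceMap S hS) = SSet.stdSimplex.face S := by
  rw [SSet.Subcomplex.range_eq_ofSimplex,
    SSet.stdSimplex.face_eq_ofSimplex S d (S.orderIsoOfFin hS)]
  congr 1

lemma edge01_comp_faceMap (hn : 1 ≤ n) (hd : 1 ≤ d) (h0 : ∃ z ∈ S, z.val = 0)
    (h1 : ∃ o ∈ S, o.val = 1) : edge01 d hd ≫ faceMap S hS = edge01 n hn := by
  refine (SSet.stdSimplex.map_comp _ _).symm.trans (congrArg SSet.stdSimplex.map ?_)
  ext j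
  exact orderEmbOfFin_val_of_le_one hS h0 h1 _ (Nat.lt_succ_iff.1 j.isLt)

variable {S hS} {F : Set (Finset (Fin (n + 1)))} {k : Fin (d + 1)}

lemma AttachesAlongHorn.range_le_spanned (h : AttachesAlongHorn F S hS k) :
    SSet.Subcomplex.range (Λ[d, k].ι ≫ faceMap S hS) ≤ spanned F := by
  rintro m _ ⟨⟨b, hb⟩, rfl⟩
  obtain ⟨i, hi⟩ := (Set.ne_univ_iff_exists_notMem _).mp hb
  obtain ⟨M, hM, hSM⟩ := h.exists_superset _ (S.orderEmbOfFin_mem hS i)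
    (fun e => hi (Or.inr ((S.orderEmbOfFin hS).injective e)))
  refine (mem_spanned_iff _).2
    ⟨M, hM, fun j => hSM (Finset.mem_erase.2 ⟨fun e => ?_, S.orderEmbOfFin_mem hS _⟩)⟩
  exact hi (Or.inl ⟨j, (S.orderEmbOfFin hS).injective e⟩)

lemma AttachesAlongHorn.spanned_inf_range_faceMap (h : AttachesAlongHorn F S hS k) :
    spanned F ⊓ SSet.Subcomplex.range (faceMap S hS) =
      SSet.Subcomplex.range (Λ[d, k].ι ≫ faceMap S hS) := by
  refine le_antisymm ?_ (le_inf h.range_le_spanned ?_)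
  · rintro m a ⟨ha, b, rfl⟩
    obtain ⟨M, hM, hbM⟩ := (mem_spanned_iff _).1 ha
    refine ⟨⟨b, fun hb => h.not_subset M hM fun x hx => ?_⟩, rfl⟩
    obtain ⟨hxk, hxS⟩ := Finset.mem_erase.1 hx
    obtain ⟨i, rfl⟩ : x ∈ Set.range (S.orderEmbOfFin hS) := by
      rwa [Finset.range_orderEmbOfFin]
    obtain ⟨j, rfl⟩ | hik : i ∈ Set.range (SSet.stdSimplex.asOrderHom b) ∪ {k} :=
      hb ▸ Set.mem_univ i
    · exact hbM j
    · exact (hxk (congrArg _ hik)).elim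
  · rw [SSet.Subcomplex.range_comp]
    exact SSet.Subcomplex.image_le_range _ _

def AttachesAlongHorn.hornMap (h : AttachesAlongHorn F S hS k) :
    (Λ[d, k] : SSet.{0}) ⟶ spanned F :=
  SSet.Subcomplex.lift _ h.range_le_spanned

variable (S hS F) in
def faceToSpanned : (Δ[d] : SSet.{0}) ⟶ spanned (insert S F) :=
  SSet.Subcomplex.lift (faceMap S hS) (by rw [range_faceMap, spanned_insert]; exact le_sup_left)

lemma AttachesAlongHorn.isPushout (h : AttachesAlongHorn F S hS k) :
    IsPushout h.hornMap Λ[d, k].ι (SSet.Subcomplex.homOfLE (spanned_mono (Set.subset_insert S F)))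
      (faceToSpanned S hS F) := by
  have sq : SSet.Subcomplex.BicartSq (SSet.Subcomplex.range (Λ[d, k].ι ≫ faceMap S hS))
      (spanned F) (SSet.Subcomplex.range (faceMap S hS)) (spanned (insert S F)) :=
    { sup_eq := by rw [range_faceMap, spanned_insert, sup_comm]
      inf_eq := h.spanned_inf_range_faceMap }
  exact sq.isPushout.of_iso' (asIso (SSet.Subcomplex.toRange _)) (Iso.refl _)
    (asIso (SSet.Subcomplex.toRange _)) (Iso.refl _) rfl rfl rfl rfl

variable (S hS F) in
lemma mem_range_homOfLE_or_faceToSpanned {m : SimplexCategoryᵒᵖ}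
    (x : (spanned (insert S F) : SSet).obj m) :
    x ∈ Set.range ((SSet.Subcomplex.homOfLE (spanned_mono (Set.subset_insert S F))).app m) ∪
      Set.range ((faceToSpanned S hS F).app m) := by
  obtain ⟨x, hx⟩ := x
  rw [spanned_insert, ← range_faceMap S hS] at hx
  obtain ⟨b, rfl⟩ | hx := hx
  · exact Or.inr ⟨b, rfl⟩
  · exact Or.inl ⟨⟨x, hx⟩, rfl⟩

end Face

section LMarked

variable (hn : 1 ≤ n)

/-- The marked simplicial set `A^ℒ`. -/
def lMarked (A : (Δ[n] : SSet.{0}).Subcomplex) (hA : SSet.Subcomplex.range (edge01 n hn) ≤ A) :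
    MSSet :=
  mkL A (SSet.Subcomplex.lift (edge01 n hn) hA)

def lMarkedIncl {A B : (Δ[n] : SSet.{0}).Subcomplex}
    (hA : SSet.Subcomplex.range (edge01 n hn) ≤ A) (h : A ≤ B) :
    lMarked hn A hA ⟶ lMarked hn B (hA.trans h) :=
  mkLHom (SSet.Subcomplex.homOfLE h) _ _ rfl

lemma mem_lMarkedIncl_congr {T : MorphismProperty MSSet}
    {A A' B B' : (Δ[n] : SSet.{0}).Subcomplex} {hA : SSet.Subcomplex.range (edge01 n hn) ≤ A}
    {hA' : SSet.Subcomplex.range (edge01 n hn) ≤ A'} {h : A ≤ B} {h' : A' ≤ B'}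
    (eA : A = A') (eB : B = B') (hT : T (lMarkedIncl hn hA h)) : T (lMarkedIncl hn hA' h') := by
  subst eA eB
  exact hT

lemma range_edge01_le_spanned {F : Set (Finset (Fin (n + 1)))}
    (hF : ∃ M ∈ F, ∀ x : Fin (n + 1), x.val ≤ 1 → x ∈ M) :
    SSet.Subcomplex.range (edge01 n hn) ≤ spanned F := by
  obtain ⟨M, hM, h01⟩ := hF
  rintro m _ ⟨b, rfl⟩
  exact (mem_spanned_iff _).2 ⟨M, hM, fun j =>
    h01 _ (Nat.lt_succ_iff.1 (SSet.stdSimplex.asOrderHom b j).isLt)⟩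

variable {S : Finset (Fin (n + 1))} {d : ℕ} {hS : S.card = d + 1} {F : Set (Finset (Fin (n + 1)))}
  (hF : SSet.Subcomplex.range (edge01 n hn) ≤ spanned F) {T : MorphismProperty MSSet}
  (hT : IsSaturatedClass T)
include hT

lemma AttachesAlongHorn.mem_lMarkedIncl_of_inner {k : Fin (d + 1)} (h : AttachesAlongHorn F S hS k)
    (hflat : ∀ ⦃A B : SSet.{0}⦄ (v : A ⟶ B), IsInnerAnodyne v → T (flatHom v))
    (hk₀ : 0 < k.val) (hkd : k.val < d) :
    T (lMarkedIncl hn hF (spanned_mono (Set.subset_insert S F))) := by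
  have hP : IsPushout (flatToMkL h.hornMap _) (flatHom Λ[d, k].ι)
      (lMarkedIncl hn hF (spanned_mono (Set.subset_insert S F)))
      (flatToMkL (faceToSpanned S hS F) _) :=
    MSSet.isPushout_of_isPushout_carrier h.isPushout (MSSet.mkL_marked_subset _ _
      ⟨_, Or.inr rfl, rfl⟩ (mem_range_homOfLE_or_faceToSpanned S hS F))
  exact hT.1 _ _ _ _ hP (hflat _ (isInnerAnodyne_horn_ι k hk₀ hkd))

lemma AttachesAlongHorn.mem_lMarkedIncl_of_left (h : AttachesAlongHorn F S hS 0)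
    (hd : 2 ≤ d) (hleft : T (leftHornIncl d hd)) (h0 : ∃ z ∈ S, z.val = 0)
    (h1 : ∃ o ∈ S, o.val = 1) :
    T (lMarkedIncl hn hF (spanned_mono (Set.subset_insert S F))) := by
  have hedge := edge01_comp_faceMap S hS hn (by omega) h0 h1
  have hP : IsPushout
      (mkLHom h.hornMap (edgeHorn d hd) _ ((cancel_mono (spanned F).ι).1 (by
        rw [Category.assoc, AttachesAlongHorn.hornMap, SSet.Subcomplex.lift_ι,
          SSet.Subcomplex.lift_ι, ← Category.assoc, edgeHorn_incl, hedge])))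
      (leftHornIncl d hd) (lMarkedIncl hn hF (spanned_mono (Set.subset_insert S F)))
      (mkLHom (faceToSpanned S hS F) (edge01 d (by omega)) _
        ((cancel_mono (spanned (insert S F)).ι).1 (by
          rw [Category.assoc, faceToSpanned, SSet.Subcomplex.lift_ι, SSet.Subcomplex.lift_ι,
            hedge]))) :=
    MSSet.isPushout_of_isPushout_carrier h.isPushout (MSSet.mkL_marked_subset _ _
      ⟨_, Or.inr rfl, rfl⟩ (mem_range_homOfLE_or_faceToSpanned S hS F))
  exact hT.1 _ _ _ _ hP hleft

end LMarked

variable (n) in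
def initialEdge : Finset (Fin (n + 1)) := {x | x.val ≤ 1}

variable (n) in
def edgeZeroTwo : Finset (Fin (n + 1)) := {x | x.val = 0 ∨ x.val = 2}

variable (n) in
def spineEdge (i : ℕ) : Finset (Fin (n + 1)) := {x | x.val = i ∨ x.val = i + 1}

variable (n) in
def faceAvoidingOne (j : ℕ) : Finset (Fin (n + 1)) := {x | x.val ≠ 1 ∧ x.val ≤ j}

variable (n) in
def leftSpineFaces : Set (Finset (Fin (n + 1))) :=
  {M | M = initialEdge n ∨ M = edgeZeroTwo n ∨ ∃ i, 2 ≤ i ∧ M = spineEdge n i}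

lemma mem_initialEdge {x : Fin (n + 1)} : x ∈ initialEdge n ↔ x.val ≤ 1 := by
  simp [initialEdge]

lemma mem_edgeZeroTwo {x : Fin (n + 1)} : x ∈ edgeZeroTwo n ↔ x.val = 0 ∨ x.val = 2 := by
  simp [edgeZeroTwo]

lemma mem_spineEdge {i : ℕ} {x : Fin (n + 1)} :
    x ∈ spineEdge n i ↔ x.val = i ∨ x.val = i + 1 := by
  simp [spineEdge]

lemma mem_faceAvoidingOne {j : ℕ} {x : Fin (n + 1)} :
    x ∈ faceAvoidingOne n j ↔ x.val ≠ 1 ∧ x.val ≤ j := by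
  simp [faceAvoidingOne]

/-- A face of `d₁Δⁿ`, glued along the inner horn at its second largest vertex `j`. -/
structure IsInnerCell (S : Finset (Fin (n + 1))) (j : ℕ) : Prop where
  two_le : 2 ≤ j
  val_ne_one : ∀ x ∈ S, x.val ≠ 1
  val_le : ∀ x ∈ S, x.val ≤ j + 1
  exists_eq : ∃ x ∈ S, x.val = j
  exists_eq_succ : ∃ x ∈ S, x.val = j + 1
  exists_lt : ∃ x ∈ S, x.val < j

/-- A face containing `0` and `1`, glued along the left horn at `0`; it is a proper face, so
that horn has dimension `< n`. -/
structure IsLeftCell (S : Finset (Fin (n + 1))) : Prop where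
  exists_eq_zero : ∃ x ∈ S, x.val = 0
  exists_eq_one : ∃ x ∈ S, x.val = 1
  three_le_card : 3 ≤ S.card
  ne_univ : S ≠ Finset.univ

variable (n) in
def IsCell (S : Finset (Fin (n + 1))) : Prop := (∃ j, IsInnerCell S j) ∨ IsLeftCell S

/-- Cells are attached in increasing weight: inner cells by largest vertex and then size, then
left cells by size (sizes are `< n + 2`). -/
noncomputable def weight (S : Finset (Fin (n + 1))) : ℕ :=
  open Classical in
  (if ∃ x ∈ S, x.val = 1 then n + 1 else S.sup (·.val)) * (n + 2) + S.card

variable (n) in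
def AttachedBefore (S M : Finset (Fin (n + 1))) : Prop :=
  M ∈ leftSpineFaces n ∨ (IsCell n M ∧ weight M < weight S)

lemma lt_add_mul_of_lt {K a a' c c' : ℕ} (hc : c < K) (h : a < a') : a * K + c < a' * K + c' := by
  nlinarith

lemma le_of_add_mul_le {K a a' c c' : ℕ} (hc' : c' < K) (h : a * K + c ≤ a' * K + c') :
    a ≤ a' := by
  by_contra h'
  exact absurd h (not_le.2 (lt_add_mul_of_lt hc' (not_le.1 h')))

lemma card_lt_add_two (S : Finset (Fin (n + 1))) : S.card < n + 2 := by
  simpa [Nat.lt_succ_iff] using Finset.card_le_univ S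

lemma val_ne_of_mem_erase {S : Finset (Fin (n + 1))} {x y : Fin (n + 1)} (hy : y ∈ S.erase x) :
    y.val ≠ x.val :=
  fun e => (Finset.mem_erase.1 hy).1 (Fin.ext e)

lemma isInnerCell_faceAvoidingOne {j : ℕ} (hj : 3 ≤ j) (hjn : j ≤ n) :
    IsInnerCell (faceAvoidingOne n j) (j - 1) :=
  ⟨by omega, fun _ hy => (mem_faceAvoidingOne.1 hy).1,
    fun _ hy => by have := (mem_faceAvoidingOne.1 hy).2; omega,
    ⟨⟨j - 1, by omega⟩, mem_faceAvoidingOne.2 ⟨by dsimp only; omega, by dsimp only; omega⟩, rfl⟩,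
    ⟨⟨j, by omega⟩, mem_faceAvoidingOne.2 ⟨by dsimp only; omega, le_rfl⟩, by dsimp only; omega⟩,
    ⟨⟨0, by omega⟩, mem_faceAvoidingOne.2 ⟨by dsimp only; omega, by dsimp only; omega⟩,
      by dsimp only; omega⟩⟩

lemma IsLeftCell.weight_eq {S : Finset (Fin (n + 1))} (h : IsLeftCell S) :
    weight S = (n + 1) * (n + 2) + S.card := by
  rw [weight, if_pos h.exists_eq_one]

namespace IsInnerCell

variable {S M : Finset (Fin (n + 1))} {j : ℕ} (h : IsInnerCell S j)
include h

lemma succ_le : j + 1 ≤ n := by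
  obtain ⟨x, -, hx⟩ := h.exists_eq_succ
  have := x.isLt
  omega

lemma weight_eq : weight S = (j + 1) * (n + 2) + S.card := by
  obtain ⟨x, hx, hxj⟩ := h.exists_eq_succ
  rw [weight, if_neg (fun ⟨y, hy, hy1⟩ => h.val_ne_one y hy hy1),
    le_antisymm (Finset.sup_le h.val_le) (hxj ▸ Finset.le_sup (f := (·.val)) hx)]

lemma exists_attachedBefore_of_lt {x : Fin (n + 1)} (hx : x ∈ S) (hxj : x.val < j) :
    ∃ M, AttachedBefore n S M ∧ S.erase x ⊆ M := by
  by_cases hlow : ∃ y ∈ S.erase x, y.val < j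
  · obtain ⟨q, hq, hqj⟩ := h.exists_eq
    obtain ⟨s, hs, hsj⟩ := h.exists_eq_succ
    have hcell : IsInnerCell (S.erase x) j :=
      ⟨h.two_le, fun y hy => h.val_ne_one y (Finset.mem_of_mem_erase hy),
        fun y hy => h.val_le y (Finset.mem_of_mem_erase hy),
        ⟨q, Finset.mem_erase.2 ⟨fun e => by subst e; omega, hq⟩, hqj⟩,
        ⟨s, Finset.mem_erase.2 ⟨fun e => by subst e; omega, hs⟩, hsj⟩, hlow⟩
    refine ⟨S.erase x, Or.inr ⟨Or.inl ⟨j, hcell⟩, ?_⟩, le_rfl⟩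
    rw [hcell.weight_eq, h.weight_eq, Finset.card_erase_of_mem hx]
    have := Finset.card_pos.2 ⟨x, hx⟩
    omega
  · push Not at hlow
    refine ⟨spineEdge n j, Or.inl (Or.inr (Or.inr ⟨j, h.two_le, rfl⟩)), fun y hy => ?_⟩
    have := hlow y hy
    have := h.val_le y (Finset.mem_of_mem_erase hy)
    rw [mem_spineEdge]
    omega

lemma exists_attachedBefore_of_eq_succ {x : Fin (n + 1)} (hxj : x.val = j + 1) :
    ∃ M, AttachedBefore n S M ∧ S.erase x ⊆ M := by
  have hmem : ∀ y ∈ S.erase x, y.val ≠ 1 ∧ y.val ≤ j := fun y hy => by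
    have := val_ne_of_mem_erase hy
    have := h.val_le y (Finset.mem_of_mem_erase hy)
    exact ⟨h.val_ne_one y (Finset.mem_of_mem_erase hy), by omega⟩
  by_cases hj3 : 3 ≤ j
  · have hW := isInnerCell_faceAvoidingOne (n := n) hj3 (by have := h.succ_le; omega)
    refine ⟨faceAvoidingOne n j, Or.inr ⟨Or.inl ⟨_, hW⟩, ?_⟩,
      fun y hy => mem_faceAvoidingOne.2 (hmem y hy)⟩
    rw [hW.weight_eq, h.weight_eq]
    exact lt_add_mul_of_lt (card_lt_add_two _) (by omega)
  · refine ⟨edgeZeroTwo n, Or.inl (Or.inr (Or.inl rfl)), fun y hy => ?_⟩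
    have := hmem y hy
    rw [mem_edgeZeroTwo]
    omega

lemma exists_attachedBefore {x : Fin (n + 1)} (hx : x ∈ S) (hxj : x.val ≠ j) :
    ∃ M, AttachedBefore n S M ∧ S.erase x ⊆ M := by
  have := h.val_le x hx
  rcases Nat.lt_or_ge x.val j with hlt | hge
  · exact h.exists_attachedBefore_of_lt hx hlt
  · exact h.exists_attachedBefore_of_eq_succ (by omega)

lemma not_erase_subset {p : Fin (n + 1)} (hp : p.val = j) (hM : M ∈ leftSpineFaces n) :
    ¬ S.erase p ⊆ M := by
  intro hsub
  obtain ⟨s, hs, hsj⟩ := h.exists_eq_succ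
  obtain ⟨l, hl, hlj⟩ := h.exists_lt
  have hsM := hsub (Finset.mem_erase.2 ⟨fun e => by subst e; omega, hs⟩)
  have hlM := hsub (Finset.mem_erase.2 ⟨fun e => by subst e; omega, hl⟩)
  have := h.two_le
  rcases hM with rfl | rfl | ⟨i, -, rfl⟩
  · rw [mem_initialEdge] at hsM
    omega
  · rw [mem_edgeZeroTwo] at hsM
    omega
  · rw [mem_spineEdge] at hsM hlM
    omega

lemma eq_of_erase_subset {p : Fin (n + 1)} (hpj : p.val = j) (hM : IsCell n M)
    (hw : weight M ≤ weight S) (hsub : S.erase p ⊆ M) : M = S := by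
  obtain ⟨s, hs, hsj⟩ := h.exists_eq_succ
  have hsM := hsub (Finset.mem_erase.2 ⟨fun e => by subst e; omega, hs⟩)
  have hjn := h.succ_le
  rw [h.weight_eq] at hw
  rcases hM with ⟨j', hM⟩ | hM
  · have := hM.val_le s hsM
    rw [hM.weight_eq] at hw
    have := le_of_add_mul_le (card_lt_add_two S) hw
    obtain rfl : j' = j := by omega
    obtain ⟨q, hqM, hqj⟩ := hM.exists_eq
    obtain rfl : q = p := Fin.ext (by omega)
    exact (Finset.eq_of_subset_of_card_le ((Finset.erase_subset_iff_of_mem hqM).1 hsub)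
      (by omega)).symm
  · rw [hM.weight_eq] at hw
    exact absurd hw (not_le.2 (lt_add_mul_of_lt (card_lt_add_two S) (by omega)))

end IsInnerCell

namespace IsLeftCell

variable {S M : Finset (Fin (n + 1))} (h : IsLeftCell S)
include h

lemma exists_two_le_val : ∃ w ∈ S, 2 ≤ w.val := by
  obtain ⟨a, ha, b, hb, c, hc, hab, hac, hbc⟩ := Finset.two_lt_card.1 h.three_le_card
  have := Fin.val_injective.ne hab
  have := Fin.val_injective.ne hac
  have := Fin.val_injective.ne hbc
  by_cases h2a : 2 ≤ a.val
  · exact ⟨a, ha, h2a⟩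
  by_cases h2b : 2 ≤ b.val
  · exact ⟨b, hb, h2b⟩
  exact ⟨c, hc, by omega⟩

lemma card_le : S.card ≤ n := by
  have := (Finset.card_lt_iff_ne_univ S).2 h.ne_univ
  simp only [Fintype.card_fin] at this
  omega

lemma exists_attachedBefore {x : Fin (n + 1)} (hx : x ∈ S) (hx0 : x.val ≠ 0) :
    ∃ M, AttachedBefore n S M ∧ S.erase x ⊆ M := by
  have hn : 3 ≤ n := h.three_le_card.trans h.card_le
  by_cases hx1 : x.val = 1
  · have hV := isInnerCell_faceAvoidingOne (n := n) hn le_rfl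
    refine ⟨faceAvoidingOne n n, Or.inr ⟨Or.inl ⟨_, hV⟩, ?_⟩, fun y hy => ?_⟩
    · rw [hV.weight_eq, h.weight_eq]
      exact lt_add_mul_of_lt (card_lt_add_two _) (by omega)
    · have := val_ne_of_mem_erase hy
      exact mem_faceAvoidingOne.2 ⟨by omega, Nat.lt_succ_iff.1 y.isLt⟩
  by_cases hhigh : ∃ w ∈ S.erase x, 2 ≤ w.val
  · obtain ⟨z, hz, hz0⟩ := h.exists_eq_zero
    obtain ⟨o, ho, ho1⟩ := h.exists_eq_one
    obtain ⟨w, hw, hw2⟩ := hhigh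
    have hz' : z ∈ S.erase x := Finset.mem_erase.2 ⟨fun e => by subst e; omega, hz⟩
    have ho' : o ∈ S.erase x := Finset.mem_erase.2 ⟨fun e => by subst e; omega, ho⟩
    have hcell : IsLeftCell (S.erase x) :=
      ⟨⟨z, hz', hz0⟩, ⟨o, ho', ho1⟩,
        Finset.two_lt_card.2 ⟨z, hz', o, ho', w, hw, fun e => by subst e; omega,
          fun e => by subst e; omega, fun e => by subst e; omega⟩,
        fun e => Finset.notMem_erase x S (e ▸ Finset.mem_univ x)⟩
    refine ⟨S.erase x, Or.inr ⟨Or.inr hcell, ?_⟩, le_rfl⟩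
    rw [hcell.weight_eq, h.weight_eq, Finset.card_erase_of_mem hx]
    have := h.three_le_card
    omega
  · push Not at hhigh
    exact ⟨initialEdge n, Or.inl (Or.inl rfl), fun y hy => mem_initialEdge.2 (by
      have := hhigh y hy; omega)⟩

lemma not_erase_subset {p : Fin (n + 1)} (hp : p.val = 0) (hM : M ∈ leftSpineFaces n) :
    ¬ S.erase p ⊆ M := by
  intro hsub
  obtain ⟨o, ho, ho1⟩ := h.exists_eq_one
  obtain ⟨w, hw, hw2⟩ := h.exists_two_le_val
  have hoM := hsub (Finset.mem_erase.2 ⟨fun e => by subst e; omega, ho⟩)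
  have hwM := hsub (Finset.mem_erase.2 ⟨fun e => by subst e; omega, hw⟩)
  rcases hM with rfl | rfl | ⟨i, hi, rfl⟩
  · rw [mem_initialEdge] at hwM
    omega
  · rw [mem_edgeZeroTwo] at hoM
    omega
  · rw [mem_spineEdge] at hoM
    omega

lemma eq_of_erase_subset {p : Fin (n + 1)} (hp0 : p.val = 0) (hM : IsCell n M)
    (hw : weight M ≤ weight S) (hsub : S.erase p ⊆ M) : M = S := by
  obtain ⟨o, ho, ho1⟩ := h.exists_eq_one
  have hoM := hsub (Finset.mem_erase.2 ⟨fun e => by subst e; omega, ho⟩)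
  rcases hM with ⟨j, hM⟩ | hM
  · exact (hM.val_ne_one o hoM ho1).elim
  · rw [hM.weight_eq, h.weight_eq] at hw
    obtain ⟨q, hqM, hq0⟩ := hM.exists_eq_zero
    obtain rfl : q = p := Fin.ext (by omega)
    exact (Finset.eq_of_subset_of_card_le ((Finset.erase_subset_iff_of_mem hqM).1 hsub)
      (by omega)).symm

end IsLeftCell

lemma IsCell.weight_lt {S : Finset (Fin (n + 1))} (h : IsCell n S) :
    weight S < (n + 2) * (n + 2) := by
  have := card_lt_add_two S
  rcases h with ⟨j, h⟩ | h
  · rw [h.weight_eq]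
    have := h.succ_le
    nlinarith
  · rw [h.weight_eq]
    nlinarith

/-- An injective refinement of `weight`, so that cells are attached one at a time. -/
noncomputable def key (S : Finset (Fin (n + 1))) : ℕ :=
  weight S * Fintype.card (Finset (Fin (n + 1))) + Fintype.equivFin _ S

variable (n) in
def keyBound : ℕ := (n + 2) * (n + 2) * Fintype.card (Finset (Fin (n + 1)))

section Key

variable {S M : Finset (Fin (n + 1))}

lemma key_lt_key (h : weight M < weight S) : key M < key S :=
  lt_add_mul_of_lt (Fintype.equivFin _ M).isLt h

lemma weight_le_of_key_lt (h : key M < key S) : weight M ≤ weight S :=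
  le_of_add_mul_le (Fintype.equivFin _ S).isLt h.le

lemma key_injective : Function.Injective (key (n := n)) := by
  intro M S h
  have hw : weight M = weight S := le_antisymm
    (le_of_add_mul_le (Fintype.equivFin _ S).isLt h.le)
    (le_of_add_mul_le (Fintype.equivFin _ M).isLt h.ge)
  rw [key, key, hw] at h
  exact (Fintype.equivFin _).injective (Fin.ext (by omega))

lemma IsCell.key_lt (h : IsCell n S) : key S < keyBound n := by
  rw [key, keyBound]
  simpa using lt_add_mul_of_lt (c' := 0) (Fintype.equivFin _ S).isLt h.weight_lt

end Key

variable (n) in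
def stage (r : ℕ) : Set (Finset (Fin (n + 1))) :=
  leftSpineFaces n ∪ {S | IsCell n S ∧ key S < r}

lemma stage_mono : Monotone (stage n) := fun _ _ hr =>
  Set.union_subset_union_right _ fun _ ⟨hS, hk⟩ => ⟨hS, hk.trans_le hr⟩

lemma stage_zero : stage n 0 = leftSpineFaces n := by
  simp [stage]

lemma exists_initialEdge_subset_leftSpineFaces :
    ∃ M ∈ leftSpineFaces n, ∀ x : Fin (n + 1), x.val ≤ 1 → x ∈ M :=
  ⟨initialEdge n, Or.inl rfl, fun _ => mem_initialEdge.2⟩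

lemma range_edge01_le_spanned_stage (hn : 1 ≤ n) (r : ℕ) :
    SSet.Subcomplex.range (edge01 n hn) ≤ spanned (stage n r) :=
  (range_edge01_le_spanned hn exists_initialEdge_subset_leftSpineFaces).trans
    (spanned_mono Set.subset_union_left)

lemma stage_succ_key {S : Finset (Fin (n + 1))} (hS : IsCell n S) :
    stage n (key S + 1) = insert S (stage n (key S)) := by
  ext M
  simp only [stage, Set.mem_union, Set.mem_insert_iff, Set.mem_ofPred_eq,
    Nat.lt_succ_iff_lt_or_eq]
  constructor
  · rintro (hM | ⟨hM, hk | hk⟩)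
    · exact Or.inr (Or.inl hM)
    · exact Or.inr (Or.inr ⟨hM, hk⟩)
    · exact Or.inl (key_injective hk)
  · rintro (rfl | hM | ⟨hM, hk⟩)
    · exact Or.inr ⟨hS, Or.inr rfl⟩
    · exact Or.inl hM
    · exact Or.inr ⟨hM, Or.inl hk⟩

lemma stage_succ_of_ne_key {r : ℕ} (h : ∀ S, IsCell n S → key S ≠ r) :
    stage n (r + 1) = stage n r := by
  ext M
  simp only [stage, Set.mem_union, Set.mem_ofPred_eq, Nat.lt_succ_iff_lt_or_eq]
  constructor
  · rintro (hM | ⟨hM, hk | hk⟩)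
    · exact Or.inl hM
    · exact Or.inr ⟨hM, hk⟩
    · exact (h M hM hk).elim
  · rintro (hM | ⟨hM, hk⟩)
    · exact Or.inl hM
    · exact Or.inr ⟨hM, Or.inl hk⟩

lemma exists_mem_stage_of_attachedBefore {S : Finset (Fin (n + 1))} {x : Fin (n + 1)}
    (h : ∃ M, AttachedBefore n S M ∧ S.erase x ⊆ M) : ∃ M ∈ stage n (key S), S.erase x ⊆ M := by
  obtain ⟨M, hM | ⟨hM, hw⟩, hsub⟩ := h
  exacts [⟨M, Or.inl hM, hsub⟩, ⟨M, Or.inr ⟨hM, key_lt_key hw⟩, hsub⟩]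

lemma not_erase_subset_of_mem_stage {S M : Finset (Fin (n + 1))} {p : Fin (n + 1)}
    (hspine : ∀ M ∈ leftSpineFaces n, ¬ S.erase p ⊆ M)
    (hcell : ∀ M, IsCell n M → weight M ≤ weight S → S.erase p ⊆ M → M = S)
    (hM : M ∈ stage n (key S)) : ¬ S.erase p ⊆ M := by
  rcases hM with hM | ⟨hM, hk⟩
  · exact hspine M hM
  · exact fun hsub => (hcell M hM (weight_le_of_key_lt hk) hsub ▸ hk).false

lemma IsInnerCell.attachesAlongHorn {S : Finset (Fin (n + 1))} {j : ℕ} (h : IsInnerCell S j)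
    {p : Fin (n + 1)} (hpj : p.val = j) {d : ℕ} (hS : S.card = d + 1)
    {k : Fin (d + 1)} (hk : S.orderEmbOfFin hS k = p) :
    AttachesAlongHorn (stage n (key S)) S hS k where
  exists_superset _ hx hxk := exists_mem_stage_of_attachedBefore
    (h.exists_attachedBefore hx fun e => hxk (hk ▸ Fin.ext (e.trans hpj.symm)))
  not_subset _ hM := hk ▸ not_erase_subset_of_mem_stage (fun _ => h.not_erase_subset hpj)
    (fun _ hMc hw hsub => h.eq_of_erase_subset hpj hMc hw hsub) hM

lemma IsLeftCell.attachesAlongHorn {S : Finset (Fin (n + 1))} (h : IsLeftCell S) {d : ℕ}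
    (hS : S.card = d + 1) : AttachesAlongHorn (stage n (key S)) S hS 0 := by
  have hp0 : (S.orderEmbOfFin hS 0).val = 0 :=
    orderEmbOfFin_val_of_le_one hS h.exists_eq_zero h.exists_eq_one 0 (by simp)
  exact
    { exists_superset := fun x hx hxp => exists_mem_stage_of_attachedBefore
        (h.exists_attachedBefore hx fun e => hxp (Fin.ext (e.trans hp0.symm)))
      not_subset := fun M hM => not_erase_subset_of_mem_stage
        (fun _ => h.not_erase_subset hp0)
        (fun _ hMc hw hsub => h.eq_of_erase_subset hp0 hMc hw hsub)
        hM }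


section Chain

variable (hn : 1 ≤ n) {T : MorphismProperty MSSet} (hT : IsSaturatedClass T)
  (hflat : ∀ ⦃A B : SSet.{0}⦄ (v : A ⟶ B), IsInnerAnodyne v → T (flatHom v))
  (hleft : ∀ (d : ℕ) (hd : 2 ≤ d), d < n → T (leftHornIncl d hd))
include hT hflat hleft

lemma mem_lMarkedIncl_insert_cell {S : Finset (Fin (n + 1))} (hS : IsCell n S) :
    T (lMarkedIncl hn (range_edge01_le_spanned_stage hn (key S))
      (spanned_mono (Set.subset_insert S (stage n (key S))))) := by
  rcases hS with ⟨j, h⟩ | h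
  · obtain ⟨p, hp, hpj⟩ := h.exists_eq
    obtain ⟨a, ha, haj⟩ := h.exists_lt
    obtain ⟨b, hb, hbj⟩ := h.exists_eq_succ
    have hcard : S.card = S.card - 1 + 1 :=
      (Nat.sub_add_cancel (Finset.card_pos.2 ⟨p, hp⟩)).symm
    obtain ⟨k, hk, hk₀, hkd⟩ := exists_orderEmbOfFin_eq_of_lt_of_lt hcard ha hp hb
      (Fin.lt_def.2 (by omega)) (Fin.lt_def.2 (by omega))
    exact (h.attachesAlongHorn hpj hcard hk).mem_lMarkedIncl_of_inner hn _ hT hflat hk₀ hkd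
  · have := h.three_le_card
    have hcard : S.card = S.card - 1 + 1 := by omega
    have hd : 2 ≤ S.card - 1 := by omega
    exact (h.attachesAlongHorn hcard).mem_lMarkedIncl_of_left hn _ hT hd
      (hleft _ hd (by have := h.card_le; omega)) h.exists_eq_zero h.exists_eq_one

lemma mem_lMarkedIncl_stage_succ (r : ℕ) :
    T (lMarkedIncl hn (range_edge01_le_spanned_stage hn r)
      (spanned_mono (stage_mono r.le_succ))) := by
  by_cases h : ∃ S, IsCell n S ∧ key S = r
  · obtain ⟨S, hS, rfl⟩ := h
    exact mem_lMarkedIncl_congr hn rfl (congrArg spanned (stage_succ_key hS)).symm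
      (mem_lMarkedIncl_insert_cell hn hT hflat hleft hS)
  · push Not at h
    exact mem_lMarkedIncl_congr hn (hA := range_edge01_le_spanned_stage hn r) (h := le_rfl) rfl
      (congrArg spanned (stage_succ_of_ne_key h)).symm (hT.id_mem _)

lemma mem_lMarkedIncl_stage (r : ℕ) :
    T (lMarkedIncl hn (range_edge01_le_spanned_stage hn 0)
      (spanned_mono (stage_mono (Nat.zero_le r)))) := by
  induction r with
  | zero => exact hT.id_mem _
  | succ r ih => exact hT.comp_mem ih (mem_lMarkedIncl_stage_succ hn hT hflat hleft r)

end Chain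

lemma leftSpine_iff_mem_spanned {m : SimplexCategoryᵒᵖ} (a : Δ[n].obj m) :
    ((∀ j, ((SSet.stdSimplex.asOrderHom a) j : ℕ) ≤ 1) ∨
      (∀ j, ((SSet.stdSimplex.asOrderHom a) j : ℕ) = 0 ∨
        ((SSet.stdSimplex.asOrderHom a) j : ℕ) = 2) ∨
      (∃ i : ℕ, 2 ≤ i ∧ ∀ j, ((SSet.stdSimplex.asOrderHom a) j : ℕ) = i ∨
        ((SSet.stdSimplex.asOrderHom a) j : ℕ) = i + 1)) ↔
      a ∈ (spanned (leftSpineFaces n)).obj m := by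
  rw [mem_spanned_iff]
  constructor
  · rintro (h | h | ⟨i, hi, h⟩)
    · exact ⟨_, Or.inl rfl, fun j => mem_initialEdge.2 (h j)⟩
    · exact ⟨_, Or.inr (Or.inl rfl), fun j => mem_edgeZeroTwo.2 (h j)⟩
    · exact ⟨_, Or.inr (Or.inr ⟨i, hi, rfl⟩), fun j => mem_spineEdge.2 (h j)⟩
  · rintro ⟨M, rfl | rfl | ⟨i, hi, rfl⟩, h⟩
    · exact Or.inl fun j => mem_initialEdge.1 (h j)
    · exact Or.inr (Or.inl fun j => mem_edgeZeroTwo.1 (h j))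
    · exact Or.inr (Or.inr ⟨i, hi, fun j => mem_spineEdge.1 (h j)⟩)

variable (n) in
def leftSpineIso : leftSpine n ≅ (spanned (leftSpineFaces n) : SSet.{0}) :=
  NatIso.ofComponents (fun _ => (Equiv.subtypeEquivRight leftSpine_iff_mem_spanned).toIso)
    fun _ => rfl

lemma IsCell.mem_stage_keyBound {S : Finset (Fin (n + 1))} (h : IsCell n S) :
    S ∈ stage n (keyBound n) :=
  Or.inr ⟨h, h.key_lt⟩

lemma exists_notMem_of_mem_stage (hn : 2 ≤ n) {M : Finset (Fin (n + 1))} {r : ℕ}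
    (hM : M ∈ stage n r) : ∃ v ∉ M, v.val ≠ 0 := by
  rcases hM with (rfl | rfl | ⟨i, hi, rfl⟩) | ⟨⟨j, hM⟩ | hM, -⟩
  · exact ⟨⟨2, by omega⟩, by simp [mem_initialEdge], by simp⟩
  · exact ⟨⟨1, by omega⟩, by simp [mem_edgeZeroTwo], by simp⟩
  · exact ⟨⟨1, by omega⟩, by rw [mem_spineEdge]; dsimp only; omega, by simp⟩
  · exact ⟨⟨1, by omega⟩, fun h1 => hM.val_ne_one _ h1 rfl, by simp⟩
  · obtain ⟨v, hv⟩ : ∃ v, v ∉ M := by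
      by_contra! h
      exact hM.ne_univ (Finset.eq_univ_iff_forall.2 h)
    obtain ⟨z, hz, hz0⟩ := hM.exists_eq_zero
    exact ⟨v, hv, fun e => hv (Fin.ext (e.trans hz0.symm) ▸ hz)⟩

lemma exists_mem_stage_superset_of_forall_ne_one (hn : 2 ≤ n) {V : Finset (Fin (n + 1))}
    (hV : ∀ y ∈ V, y.val ≠ 1) : ∃ M ∈ stage n (keyBound n), V ⊆ M := by
  by_cases hlow : ∀ y ∈ V, y.val ≤ 2
  · refine ⟨edgeZeroTwo n, Or.inl (Or.inr (Or.inl rfl)), fun y hy => ?_⟩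
    have := hlow y hy
    have := hV y hy
    rw [mem_edgeZeroTwo]
    omega
  · push Not at hlow
    obtain ⟨y, -, hy⟩ := hlow
    have := y.isLt
    exact ⟨_, IsCell.mem_stage_keyBound (Or.inl ⟨_, isInnerCell_faceAvoidingOne (by omega) le_rfl⟩),
      fun y hy => mem_faceAvoidingOne.2 ⟨hV y hy, Nat.lt_succ_iff.1 y.isLt⟩⟩

lemma exists_mem_stage_superset (hn : 2 ≤ n) {V : Finset (Fin (n + 1))} {v : Fin (n + 1)}
    (hv : v ∉ V) (hv0 : v.val ≠ 0) : ∃ M ∈ stage n (keyBound n), V ⊆ M := by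
  have hne : ∀ y ∈ V, y.val ≠ v.val := fun y hy e => hv (Fin.ext e ▸ hy)
  by_cases hv1 : v.val = 1
  · exact exists_mem_stage_superset_of_forall_ne_one hn fun y hy => by
      have := hne y hy
      omega
  by_cases hlow : ∀ y ∈ V, y.val ≤ 1
  · exact ⟨initialEdge n, Or.inl (Or.inl rfl), fun y hy => mem_initialEdge.2 (hlow y hy)⟩
  push Not at hlow
  obtain ⟨w, hw, hw2⟩ := hlow
  set M := insert (⟨0, by omega⟩ : Fin (n + 1)) (insert ⟨1, by omega⟩ V)
  have h0 : (⟨0, by omega⟩ : Fin (n + 1)) ∈ M := Finset.mem_insert_self _ _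
  have h1 : (⟨1, by omega⟩ : Fin (n + 1)) ∈ M :=
    Finset.mem_insert_of_mem (Finset.mem_insert_self _ _)
  have hwM : w ∈ M := Finset.mem_insert_of_mem (Finset.mem_insert_of_mem hw)
  have hcell : IsLeftCell M :=
    ⟨⟨_, h0, rfl⟩, ⟨_, h1, rfl⟩,
      Finset.two_lt_card.2 ⟨_, h0, _, h1, w, hwM, by simp,
        fun e => by have := Fin.ext_iff.1 e; dsimp only at this; omega,
        fun e => by have := Fin.ext_iff.1 e; dsimp only at this; omega⟩,
      fun e => by
        have hvM : v ∈ M := e ▸ Finset.mem_univ v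
        simp only [M, Finset.mem_insert, Fin.ext_iff] at hvM
        rcases hvM with h | h | h
        exacts [hv0 h, hv1 h, hv h]⟩
  exact ⟨M, IsCell.mem_stage_keyBound (Or.inr hcell),
    (Finset.subset_insert _ _).trans (Finset.subset_insert _ _)⟩

lemma spanned_stage_keyBound (hn : 2 ≤ n) : spanned (stage n (keyBound n)) = Λ[n, 0] := by
  ext m a
  rw [mem_spanned_iff, SSet.mem_horn_iff, Ne, Set.eq_univ_iff_forall]
  push Not
  constructor
  · rintro ⟨M, hM, ha⟩
    obtain ⟨v, hv, hv0⟩ := exists_notMem_of_mem_stage hn hM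
    refine ⟨v, ?_⟩
    rintro (⟨j, rfl⟩ | h0)
    · exact hv (ha j)
    · exact hv0 (by rw [Set.mem_singleton_iff.1 h0]; rfl)
  · rintro ⟨v, hv⟩
    obtain ⟨M, hM, hsub⟩ := exists_mem_stage_superset hn
      (V := Finset.image (SSet.stdSimplex.asOrderHom a) Finset.univ) (v := v)
      (by simpa using fun j h => hv (Or.inl ⟨j, h⟩)) (fun h => hv (Or.inr (Fin.ext h)))
    exact ⟨M, hM, fun j => hsub (Finset.mem_image_of_mem _ (Finset.mem_univ j))⟩

lemma spanned_leftSpineFaces_le_horn (hn : 2 ≤ n) : spanned (leftSpineFaces n) ≤ Λ[n, 0] := by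
  rw [← stage_zero, ← spanned_stage_keyBound hn]
  exact spanned_mono (stage_mono (Nat.zero_le _))

def leftSpineLIso (hn : 1 ≤ n) :
    mkL (leftSpine n) (edgeLeftSpine n hn) ≅
      lMarked hn (spanned (leftSpineFaces n))
        (range_edge01_le_spanned hn exists_initialEdge_subset_leftSpineFaces) :=
  mkLIso (leftSpineIso n) rfl

lemma mem_lMarkedIncl_leftSpineFaces_horn (hn : 2 ≤ n) {T : MorphismProperty MSSet}
    (hT : IsSaturatedClass T)
    (hflat : ∀ ⦃A B : SSet.{0}⦄ (v : A ⟶ B), IsInnerAnodyne v → T (flatHom v))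
    (hleft : ∀ (d : ℕ) (hd : 2 ≤ d), d < n → T (leftHornIncl d hd)) :
    T (lMarkedIncl (by omega)
      (range_edge01_le_spanned (by omega) exists_initialEdge_subset_leftSpineFaces)
      (spanned_leftSpineFaces_le_horn hn)) :=
  mem_lMarkedIncl_congr _ (congrArg spanned stage_zero) (spanned_stage_keyBound hn)
    (mem_lMarkedIncl_stage (by omega) hT hflat hleft _)

/-- let `T` be a saturated class of morphisms of marked simplicial sets, all
of whose underlying maps are monomorphisms, with the right cancellation property, containing
the flat-marked inner anodyne maps and the `L`-marked left spine inclusions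
`Ln ↪ Δⁿ` for `n ≥ 2`.  Then `T` contains all `L`-marked left horn inclusions
`Λⁿ₀ ↪ Δⁿ`, `n ≥ 2`. -/
theorem saturated_class_with_left_spines_contains_left_horns
    (T : MorphismProperty MSSet)
    (hsat : IsSaturatedClass T)
    (hcancel : ∀ ⦃X Y Z : MSSet⦄ (u : X ⟶ Y) (v : Y ⟶ Z), T u → T (u ≫ v) → T v)
    (hflat : ∀ ⦃A B : SSet.{0}⦄ (v : A ⟶ B), IsInnerAnodyne v → T (flatHom v))
    (hspine : ∀ (n : ℕ) (hn : 2 ≤ n),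
      T (mkLHom (leftSpineIncl n) (edgeLeftSpine n (by omega)) (edge01 n (by omega))
        (edgeLeftSpine_incl n (by omega)))) :
    ∀ (n : ℕ) (hn : 2 ≤ n),
      T (mkLHom (Λ[n, 0].ι) (edgeHorn n hn) (edge01 n (by omega))
        (edgeHorn_incl n hn)) := by
  intro n
  induction n using Nat.strong_induction_on with
  | _ n ih =>
  intro hn
  have hspineToHorn := hsat.comp_mem (hsat.iso_mem (leftSpineLIso (by omega)))
    (mem_lMarkedIncl_leftSpineFaces_horn hn hsat hflat fun d hd hdn => ih d hdn hd)
  exact hcancel _ _ hspineToHorn (hspine n hn)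

end Paper
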